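/- arXiv:1011.5530 — 6 statements merged into one kernel-verified Lean document; each statement's English description precedes it below -/
import Mathlib

section
/- Let K and L be finite lattice-convex subsets of ℤ² whose affine hulls are all of ℝ², and suppose g_K = g_L. Then m'(K) = m'(L), m''(K) = m''(L), m(K) = m(L), U(K) ∪ U(−K) = U(L) ∪ U(−L), and δ(K) = δ(L). -/
/-!
For `u ≠ 0` the support set of `K - K = supp g_K` in direction `u` is `F(K,u) - F(K,-u)`.
For lattice-convex `K` both `F(K,u)` and `F(K,-u)` are lattice segments with the same step,
so this difference has `|F(K,u)| + |F(K,-u)| - 1` points, and on it `g_K` attains the maximum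
`min |F(K,u)| |F(K,-u)|`, at the difference of the initial points. Sum and minimum determine the
unordered pair `{|F(K,u)|, |F(K,-u)|}`, so `g_K` determines this pair for every `u`; all the
listed invariants are functions of these pairs (for `δ`, since `D(U ∪ -U) = D(U)`).
-/

open scoped Pointwise ENNReal

noncomputable section

abbrev Z2 : Type := ℤ × ℤ
abbrev R2 : Type := ℝ × ℝ

/-- The canonical embedding of `ℤ²` into `ℝ²`. -/
def toR (p : Z2) : R2 := ((p.1 : ℝ), (p.2 : ℝ))

/-- The standard scalar product on `ℝ²`. -/
def dotR (x y : R2) : ℝ := x.1 * y.1 + x.2 * y.2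

/-- The covariogram of a set `K ⊆ ℤ²`: `u ↦ |K ∩ (K + u)|`. -/
def cov (K : Set Z2) (u : Z2) : ℕ := (K ∩ ((fun x => x + u) '' K)).ncard

/-- `K ⊆ ℤ²` is lattice-convex if it is the intersection of `ℤ²` with a convex set. -/
def latticeConvex (K : Set Z2) : Prop := ∃ C : Set R2, Convex ℝ C ∧ K = toR ⁻¹' C

/-- The affine hull of `K` is all of `ℝ²`. -/
def spans (K : Set Z2) : Prop := affineSpan ℝ (toR '' K) = ⊤

/-- `L ∈ [K]`: `L` is a translate of `K` or a translate of `−K`. -/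
def sameClass (K L : Set Z2) : Prop :=
  ∃ t : Z2, L = (fun x => x + t) '' K ∨ L = (fun x => t - x) '' K

/-- The support set `F(K,u)` of `K` in direction `u ∈ ℝ²`. -/
def suppSet (K : Set Z2) (u : R2) : Set Z2 :=
  {x ∈ K | ∀ y ∈ K, dotR (toR y) u ≤ dotR (toR x) u}

/-- A vector of `ℤ²` is primitive if the gcd of its coordinates is `1`. -/
def primitive (u : Z2) : Prop := Int.gcd u.1 u.2 = 1

/-- `u ≠ 0` is an outer normal of an edge of `K` if `F(K,u)` has more than one point. -/
def isEdge (K : Set Z2) (u : Z2) : Prop := u ≠ 0 ∧ 1 < (suppSet K (toR u)).ncard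

/-- `U(K)`: primitive outer normals of edges of `K`. -/
def normals (K : Set Z2) : Set Z2 := {u | primitive u ∧ isEdge K u}

/-- `−K`. -/
def negSet (K : Set Z2) : Set Z2 := (fun x => -x) '' K

/-- `m'(K) = min {|F(K,u)| : u ∈ U(K)}` (with `min ∅ = ∞`). -/
def mOne (K : Set Z2) : ℝ≥0∞ := ⨅ u ∈ normals K, ((suppSet K (toR u)).ncard : ℝ≥0∞)

/-- `m''(K) = min {|F(K,u)| − |F(K,−u)| + 1 : u ≠ 0, |F(K,u)| > |F(K,−u)| > 1}`. -/
def mTwo (K : Set Z2) : ℝ≥0∞ :=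
  ⨅ u ∈ {u : Z2 | u ≠ 0 ∧ 1 < (suppSet K (toR (-u))).ncard ∧
      (suppSet K (toR (-u))).ncard < (suppSet K (toR u)).ncard},
    (((suppSet K (toR u)).ncard - (suppSet K (toR (-u))).ncard + 1 : ℕ) : ℝ≥0∞)

/-- `m(K) = min {m'(K), m''(K)}`. -/
def mm (K : Set Z2) : ℝ≥0∞ := min (mOne K) (mTwo K)

/-- Determinant of the 2×2 matrix with columns `u`, `v`. -/
def detZ (u v : Z2) : ℤ := u.1 * v.2 - u.2 * v.1

/-- `D(U) = {|det(u₁,u₂)| : u₁, u₂ ∈ U} \ {0}`. -/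
def Dset (U : Set Z2) : Set ℝ≥0∞ :=
  {d | d ≠ 0 ∧ ∃ u ∈ U, ∃ v ∈ U, d = ((detZ u v).natAbs : ℝ≥0∞)}

/-- The discrepancy `δ(U) = max D(U) / min D(U)`. -/
def disc (U : Set Z2) : ℝ≥0∞ := sSup (Dset U) / sInf (Dset U)

/-- `δ(K) = δ(U(K))`. -/
def discK (K : Set Z2) : ℝ≥0∞ := disc (normals K)

/-- Two vectors of `ℝ²` are parallel (linearly dependent). -/
def Parallel2 (x w : R2) : Prop := x.1 * w.2 = x.2 * w.1

/-- Two vectors of `ℤ²` are parallel (linearly dependent). -/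
def ParallelZ (u v : Z2) : Prop := u.1 * v.2 = u.2 * v.1

/-- A polyhedron in `ℝ²`: an intersection of finitely many closed halfplanes. -/
def IsPolyhedron (P : Set R2) : Prop :=
  ∃ H : Finset (R2 × ℝ), P = ⋂ h ∈ H, {x : R2 | dotR x h.1 ≤ h.2}

/-- `E` is an edge (one-dimensional face) of the polyhedron `P`:
a convex extreme subset of `P` with at least two points that is contained in a line. -/
def IsPolyEdge (P E : Set R2) : Prop :=
  IsExtreme ℝ P E ∧ Convex ℝ E ∧ (∃ p ∈ E, ∃ q ∈ E, p ≠ q) ∧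
    ∃ a d : R2, ∀ x ∈ E, ∃ t : ℝ, x = a + t • d

/-- Every edge of `P` is parallel to some vector of `W`. -/
def edgesParallelTo (P : Set R2) (W : Set Z2) : Prop :=
  ∀ E : Set R2, IsPolyEdge P E → ∃ w ∈ W, ∀ p ∈ E, ∀ q ∈ E, Parallel2 (p - q) (toR w)

/-- `u` is parallel to an edge of the convex hull of `K`. -/
def parEdgeHull (K : Set Z2) (u : Z2) : Prop :=
  ∃ E : Set R2, IsPolyEdge (convexHull ℝ (toR '' K)) E ∧
    ∀ p ∈ E, ∀ q ∈ E, Parallel2 (p - q) (toR u)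

/-- The conical hull of a set in `ℝ²`. -/
def coneHull (s : Set R2) : Set R2 :=
  {x | ∃ c : ℝ, 0 ≤ c ∧ ∃ y ∈ convexHull ℝ s, x = c • y}

/-- The supporting cone `S(K,v) = cone (K − v)`. -/
def suppCone (K : Set Z2) (v : Z2) : Set R2 :=
  coneHull ((fun x => toR x - toR v) '' K)

/-- `v` is a vertex of `K`: a support set of `K` consisting of exactly one point. -/
def isVertex (K : Set Z2) (v : Z2) : Prop := ∃ u : R2, u ≠ 0 ∧ suppSet K u = {v}

/-- A set is centrally symmetric if it is a translate of its reflection. -/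
def centSym (A : Set Z2) : Prop := ∃ t : Z2, A = (fun x => t - x) '' A

/-- The Minkowski sum of `S` and `T` is direct. -/
def directSum (S T : Set Z2) : Prop :=
  ∀ s ∈ S, ∀ s' ∈ S, ∀ t ∈ T, ∀ t' ∈ T, s + t = s' + t' → s = s' ∧ t = t'

/-- `T₁ = {0,…,k} × {0}`. -/
def T1set (k : ℤ) : Set Z2 := {p | 0 ≤ p.1 ∧ p.1 ≤ k ∧ p.2 = 0}

/-- `T₂ = {0,…,ℓ} × {1}`. -/
def T2set (l : ℤ) : Set Z2 := {p | 0 ≤ p.1 ∧ p.1 ≤ l ∧ p.2 = 1}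

/-- `T = ({0,…,k} × {0}) ∪ ({0,…,ℓ} × {1})`. -/
def Tset (k l : ℤ) : Set Z2 := T1set k ∪ T2set l

def wOne (k : ℤ) : Z2 := (-k - 1, 1)
def wTwo (l : ℤ) : Z2 := (l + 1, 1)

/-- The lattice `𝕃 = ℤw₁ + ℤw₂`. -/
def ZLat (k l : ℤ) : Set Z2 := {p | ∃ a b : ℤ, p = a • wOne k + b • wTwo l}

/-- `S` is lattice-convex with respect to the lattice `Λ`. -/
def latticeConvexIn (Λ S : Set Z2) : Prop := ∃ C : Set R2, Convex ℝ C ∧ S = Λ ∩ toR ⁻¹' C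

/-- The translate `s + A`. -/
def transl (s : Z2) (A : Set Z2) : Set Z2 := (fun x => s + x) '' A

/-- The horizontal section `I_h` of `K` at height `h`. -/
def sect (K : Set Z2) (h : ℤ) : Set Z2 := {p ∈ K | p.2 = h}

/-- `𝒯(h)`: the members of `𝒯₁ ∪ 𝒯₂` contained in `I_h`. -/
def TcalSet (k l : ℤ) (S : Set Z2) (h : ℤ) : Set (Set Z2) :=
  {J | (∃ s ∈ S, J = transl s (T1set k) ∨ J = transl s (T2set l)) ∧ J ⊆ sect (S + Tset k l) h}

/-- `J` strictly precedes `J'` in the left-to-right order. -/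
def precedes (J J' : Set Z2) : Prop := ∀ p ∈ J, ∀ q ∈ J', p.1 < q.1

/-- Adjacency in the graph `G_S`. -/
def adjStep (k l : ℤ) (S : Set Z2) (a b : Z2) : Prop :=
  a ∈ S ∧ b ∈ S ∧
    (b - a = wOne k ∨ b - a = -(wOne k) ∨ b - a = wTwo l ∨ b - a = -(wTwo l) ∨
      (k = l + 1 ∧ (b - a = wOne k + wTwo l ∨ b - a = -(wOne k + wTwo l))))

/-- The graph `G_S` is connected. -/
def GConnected (k l : ℤ) (S : Set Z2) : Prop :=
  ∀ s ∈ S, ∀ s' ∈ S, Relation.ReflTransGen (adjStep k l S) s s'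

end

lemma toR_zero : toR 0 = 0 := by
  simp [toR]

lemma toR_add (x y : Z2) : toR (x + y) = toR x + toR y := by
  simp [toR]

lemma toR_sub (x y : Z2) : toR (x - y) = toR x - toR y := by
  simp [toR]

lemma toR_neg (x : Z2) : toR (-x) = -toR x := by
  simp [toR]

lemma toR_zsmul (t : ℤ) (x : Z2) : toR (t • x) = (t : ℝ) • toR x := by
  simp [toR]

lemma dotR_sub_left (x y u : R2) : dotR (x - y) u = dotR x u - dotR y u := by
  simp only [dotR, Prod.fst_sub, Prod.snd_sub]; ring

lemma dotR_add_left (x y u : R2) : dotR (x + y) u = dotR x u + dotR y u := by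
  simp only [dotR, Prod.fst_add, Prod.snd_add]; ring

lemma dotR_neg_right (x u : R2) : dotR x (-u) = -dotR x u := by
  simp only [dotR, Prod.fst_neg, Prod.snd_neg]; ring

lemma dotR_zero_right (x : R2) : dotR x 0 = 0 := by
  simp [dotR]

lemma dotR_toR_toR (x u : Z2) : dotR (toR x) (toR u) = ((x.1 * u.1 + x.2 * u.2 : ℤ) : ℝ) := by
  simp [dotR, toR]

section SupportSets

variable {K A B : Set Z2} {u : R2} {x y : Z2}

lemma mem_suppSet_neg :
    x ∈ suppSet K (-u) ↔ x ∈ K ∧ ∀ y ∈ K, dotR (toR x) u ≤ dotR (toR y) u := by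
  show _ ∧ _ ↔ _
  simp only [dotR_neg_right, neg_le_neg_iff]

lemma suppSet_subset (K : Set Z2) (u : R2) : suppSet K u ⊆ K := fun _ hx => hx.1

lemma suppSet_zero (K : Set Z2) : suppSet K 0 = K := by
  simp [suppSet, dotR_zero_right]

lemma suppSet_nonempty (hK : K.Finite) (hne : K.Nonempty) (u : R2) :
    (suppSet K u).Nonempty :=
  let ⟨x, hx, hmax⟩ := K.exists_max_image (fun y => dotR (toR y) u) hK hne
  ⟨x, hx, hmax⟩

lemma mem_suppSet_of_le (hx : x ∈ suppSet K u) (hy : y ∈ K)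
    (hle : dotR (toR x) u ≤ dotR (toR y) u) : y ∈ suppSet K u :=
  ⟨hy, fun z hz => (hx.2 z hz).trans hle⟩

lemma suppSet_sub (hA : (suppSet A u).Nonempty) (hB : (suppSet B (-u)).Nonempty) :
    suppSet (A - B) u = suppSet A u - suppSet B (-u) := by
  obtain ⟨a, ha⟩ := hA
  obtain ⟨b, hb⟩ := hB
  ext v
  constructor
  · rintro ⟨hv, hmax⟩
    obtain ⟨x, hx, y, hy, rfl⟩ := Set.mem_sub.1 hv
    have hab := hmax (a - b) (Set.sub_mem_sub ha.1 hb.1)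
    simp only [toR_sub, dotR_sub_left] at hab
    have hxa := ha.2 x hx
    have hby := (mem_suppSet_neg.1 hb).2 y hy
    refine ⟨x, mem_suppSet_of_le ha hx (by linarith), y, mem_suppSet_of_le hb hy ?_, rfl⟩
    rw [dotR_neg_right, dotR_neg_right]
    linarith
  · rintro ⟨x, hx, y, hy, rfl⟩
    refine ⟨Set.sub_mem_sub hx.1 hy.1, ?_⟩
    rintro _ ⟨x', hx', y', hy', rfl⟩
    simp only [toR_sub, dotR_sub_left]
    linarith [hx.2 x' hx', (mem_suppSet_neg.1 hy).2 y' hy']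

lemma inter_image_add_sub_eq (hx : x ∈ suppSet K u) (hy : y ∈ suppSet K (-u)) :
    K ∩ (· + (x - y)) '' K = suppSet K u ∩ (· + (x - y)) '' suppSet K (-u) := by
  refine subset_antisymm ?_
    (Set.inter_subset_inter (suppSet_subset K u) (Set.image_mono (suppSet_subset K (-u))))
  rintro _ ⟨hz, w, hw, rfl⟩
  have hdot : dotR (toR (w + (x - y))) u = dotR (toR w) u + dotR (toR x) u - dotR (toR y) u := by
    rw [toR_add, toR_sub, dotR_add_left, dotR_sub_left]; ring
  have hzx := hx.2 _ hz
  have hyw := (mem_suppSet_neg.1 hy).2 w hw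
  refine ⟨mem_suppSet_of_le hx hz (by linarith), w, mem_suppSet_of_le hy hw ?_, rfl⟩
  rw [dotR_neg_right, dotR_neg_right]
  linarith

end SupportSets

section Covariogram

variable {K : Set Z2}

lemma cov_zero (K : Set Z2) : cov K 0 = K.ncard := by
  simp [cov]

lemma support_cov (hK : K.Finite) : Function.support (cov K) = K - K := by
  ext v
  rw [Function.mem_support, cov, ← Nat.pos_iff_ne_zero, Set.ncard_pos (hK.inter_of_left _)]
  constructor
  · rintro ⟨_, hx, y, hy, rfl⟩
    exact ⟨y + v, hx, y, hy, add_sub_cancel_left y v⟩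
  · rintro ⟨x, hx, y, hy, rfl⟩
    exact ⟨x, hx, y, hy, add_sub_cancel y x⟩

lemma cov_sub_le_min {u : R2} {x y : Z2} (hK : K.Finite) (hx : x ∈ suppSet K u)
    (hy : y ∈ suppSet K (-u)) :
    cov K (x - y) ≤ min (suppSet K u).ncard (suppSet K (-u)).ncard := by
  have hfin : ∀ v, (suppSet K v).Finite := fun v => hK.subset (suppSet_subset K v)
  rw [cov, inter_image_add_sub_eq hx hy]
  refine le_min (Set.ncard_le_ncard Set.inter_subset_left (hfin u)) ?_
  calc _ ≤ ((· + (x - y)) '' suppSet K (-u)).ncard :=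
        Set.ncard_le_ncard Set.inter_subset_right ((hfin (-u)).image _)
    _ = _ := Set.ncard_image_of_injective _ (add_left_injective _)

end Covariogram

section LatticeSegments

def latticeSeg (p e : Z2) (n : ℕ) : Set Z2 := (fun t : ℤ => p + t • e) '' Set.Icc 0 (n : ℤ)

variable {p q e : Z2} {n m : ℕ}

lemma injective_add_zsmul (p : Z2) (he : e ≠ 0) : Function.Injective fun t : ℤ => p + t • e :=
  (add_right_injective p).comp (smul_left_injective ℤ he)

lemma ncard_latticeSeg (he : e ≠ 0) : (latticeSeg p e n).ncard = n + 1 := by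
  rw [latticeSeg, Set.ncard_image_of_injective _ (injective_add_zsmul p he), ← Finset.coe_Icc,
    Set.ncard_coe_finset, Int.card_Icc]
  omega

lemma latticeSeg_sub_latticeSeg :
    latticeSeg p e n - latticeSeg q e m = latticeSeg (p - q - (m : ℤ) • e) e (n + m) := by
  ext v
  constructor
  · rintro ⟨_, ⟨i, hi, rfl⟩, _, ⟨j, hj, rfl⟩, rfl⟩
    rw [Set.mem_Icc] at hi hj
    refine ⟨i - j + m, ⟨by omega, by push_cast; omega⟩, ?_⟩
    module
  · rintro ⟨t, ht, rfl⟩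
    rw [Set.mem_Icc] at ht
    push_cast at ht
    refine ⟨p + max 0 (t - m) • e, ⟨max 0 (t - m), ⟨by omega, by omega⟩, rfl⟩,
      q + (max 0 (t - m) - (t - m)) • e, ⟨_, ⟨by omega, by omega⟩, rfl⟩, ?_⟩
    module

lemma image_add_latticeSeg (v : Z2) : (· + v) '' latticeSeg q e m = latticeSeg (q + v) e m := by
  rw [latticeSeg, latticeSeg, Set.image_image]
  congr 1
  funext t
  abel

lemma latticeSeg_inter_latticeSeg (he : e ≠ 0) :
    latticeSeg p e n ∩ latticeSeg p e m = latticeSeg p e (min n m) := by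
  rw [latticeSeg, latticeSeg, latticeSeg, ← Set.image_inter (injective_add_zsmul p he),
    Set.Icc_inter_Icc, max_self, Nat.cast_min]

lemma image_Icc_eq_latticeSeg (p e : Z2) {a b : ℤ} (hab : a ≤ b) :
    (fun t : ℤ => p + t • e) '' Set.Icc a b = latticeSeg (p + a • e) e (b - a).toNat := by
  rw [latticeSeg, Int.toNat_of_nonneg (sub_nonneg.2 hab)]
  ext x
  constructor
  · rintro ⟨t, ⟨h₁, h₂⟩, rfl⟩
    exact ⟨t - a, ⟨by omega, by omega⟩, by module⟩
  · rintro ⟨t, ⟨h₁, h₂⟩, rfl⟩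
    exact ⟨t + a, ⟨by omega, by omega⟩, by module⟩

end LatticeSegments

section LatticeConvex

variable {K : Set Z2}

lemma exists_forall_dot_eq_zero_iff {u : Z2} (hu : u ≠ 0) :
    ∃ e : Z2, e ≠ 0 ∧ ∀ w : Z2, dotR (toR w) (toR u) = 0 ↔ ∃ t : ℤ, w = t • e := by
  have hg : 0 < Int.gcd u.1 u.2 := Int.gcd_pos_iff.2 (by
    by_contra! h
    exact hu (Prod.ext h.1 h.2))
  obtain ⟨x, y, hxy⟩ : IsCoprime (u.1 / Int.gcd u.1 u.2) (u.2 / Int.gcd u.1 u.2) :=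
    Int.isCoprime_iff_gcd_eq_one.2 (Int.gcd_div_gcd_div_gcd hg)
  have hu1 := Int.ediv_mul_cancel (Int.gcd_dvd_left u.1 u.2)
  have hu2 := Int.ediv_mul_cancel (Int.gcd_dvd_right u.1 u.2)
  generalize u.1 / Int.gcd u.1 u.2 = a at hxy hu1
  generalize u.2 / Int.gcd u.1 u.2 = b at hxy hu2
  have hg' : (0 : ℤ) < Int.gcd u.1 u.2 := by exact_mod_cast hg
  generalize (Int.gcd u.1 u.2 : ℤ) = g at hu1 hu2 hg'
  refine ⟨(-b, a), fun h => ?_, fun w => ?_⟩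
  · obtain ⟨hb, ha⟩ := Prod.ext_iff.1 h
    simp only [Prod.fst_zero, Prod.snd_zero, neg_eq_zero] at ha hb
    simp [ha, hb] at hxy
  rw [dotR_toR_toR, Int.cast_eq_zero, ← hu1, ← hu2]
  constructor
  · intro hw
    have hw' : w.1 * a + w.2 * b = 0 := by
      have : (w.1 * a + w.2 * b) * g = 0 := by linear_combination hw
      exact (mul_eq_zero.1 this).resolve_right hg'.ne'
    -- Bezout `x a + y b = 1` recovers the coefficient of `w` along `(-b, a)`
    refine ⟨x * w.2 - y * w.1, Prod.ext ?_ ?_⟩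
    · change w.1 = (x * w.2 - y * w.1) * -b
      linear_combination x * hw' - w.1 * hxy
    · change w.2 = (x * w.2 - y * w.1) * a
      linear_combination y * hw' - w.2 * hxy
  · rintro ⟨t, rfl⟩
    change t * -b * (a * _) + t * a * (b * _) = 0
    ring

lemma ordConnected_preimage_of_latticeConvex (hK : latticeConvex K) (p e : Z2) :
    ((fun t : ℤ => p + t • e) ⁻¹' K).OrdConnected := by
  obtain ⟨C, hC, rfl⟩ := hK
  have h := (hC.affine_preimage (AffineMap.lineMap (toR p) (toR (p + e)))).ordConnected
  convert h.preimage_mono (f := (Int.cast : ℤ → ℝ)) Int.cast_mono using 1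
  ext t
  simp only [Set.mem_preimage, AffineMap.lineMap_apply, toR_add, toR_zsmul, vsub_eq_sub,
    vadd_eq_add, add_sub_cancel_right, add_comm (toR p)]

lemma exists_suppSet_eq_latticeSeg (hfin : K.Finite) (hconv : latticeConvex K)
    (hne : K.Nonempty) {u : R2} {e : Z2} (he0 : e ≠ 0)
    (he : ∀ w : Z2, dotR (toR w) u = 0 ↔ ∃ t : ℤ, w = t • e) :
    ∃ p n, suppSet K u = latticeSeg p e n := by
  obtain ⟨x₀, hx₀⟩ := suppSet_nonempty hfin hne u
  set f : ℤ → Z2 := fun t => x₀ + t • e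
  have hF : suppSet K u = f '' (f ⁻¹' K) := by
    ext x
    constructor
    · intro hx
      obtain ⟨t, ht⟩ := (he (x - x₀)).1 (by
        rw [toR_sub, dotR_sub_left]
        linarith [hx.2 x₀ hx₀.1, hx₀.2 x hx.1])
      have hfx : f t = x := by simp only [f, ← ht, add_sub_cancel]
      exact ⟨t, by rw [Set.mem_preimage, hfx]; exact hx.1, hfx⟩
    · rintro ⟨t, ht, rfl⟩
      refine mem_suppSet_of_le hx₀ ht (le_of_eq ?_)
      rw [toR_add, dotR_add_left, (he _).2 ⟨t, rfl⟩, add_zero]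
  have hT : (f ⁻¹' K).Finite := hfin.preimage (injective_add_zsmul x₀ he0).injOn
  have hTne : (f ⁻¹' K).Nonempty := ⟨0, by simpa [f] using hx₀.1⟩
  have hIcc := (hTne.ordConnected_iff_of_bdd hT.bddBelow hT.bddAbove).1
    (ordConnected_preimage_of_latticeConvex hconv x₀ e)
  rw [hF, hIcc, image_Icc_eq_latticeSeg _ _ (csInf_le_csSup hTne hT.bddBelow hT.bddAbove)]
  exact ⟨_, _, rfl⟩

lemma exists_suppSet_pair_eq_latticeSeg (hfin : K.Finite) (hconv : latticeConvex K)
    (hne : K.Nonempty) {u : Z2} (hu : u ≠ 0) :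
    ∃ e ≠ 0, ∃ p q n m, suppSet K (toR u) = latticeSeg p e n ∧
      suppSet K (-toR u) = latticeSeg q e m := by
  obtain ⟨e, he0, he⟩ := exists_forall_dot_eq_zero_iff hu
  have he' : ∀ w : Z2, dotR (toR w) (-toR u) = 0 ↔ ∃ t : ℤ, w = t • e := by
    simpa only [dotR_neg_right, neg_eq_zero] using he
  obtain ⟨p, n, hp⟩ := exists_suppSet_eq_latticeSeg hfin hconv hne he0 he
  obtain ⟨q, m, hq⟩ := exists_suppSet_eq_latticeSeg hfin hconv hne he0 he'
  exact ⟨e, he0, p, q, n, m, hp, hq⟩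

end LatticeConvex

section CovariogramDeterminesSupportSets

variable {K L : Set Z2}

lemma ncard_suppSet_support_cov (hfin : K.Finite) (hconv : latticeConvex K) (hne : K.Nonempty)
    {u : Z2} (hu : u ≠ 0) :
    (suppSet (Function.support (cov K)) (toR u)).ncard + 1 =
      (suppSet K (toR u)).ncard + (suppSet K (-toR u)).ncard := by
  obtain ⟨e, he0, p, q, n, m, hp, hq⟩ := exists_suppSet_pair_eq_latticeSeg hfin hconv hne hu
  rw [support_cov hfin, suppSet_sub (suppSet_nonempty hfin hne _) (suppSet_nonempty hfin hne _),
    hp, hq, latticeSeg_sub_latticeSeg, ncard_latticeSeg he0, ncard_latticeSeg he0,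
    ncard_latticeSeg he0]
  ring

lemma isGreatest_cov_image_suppSet_support_cov (hfin : K.Finite) (hconv : latticeConvex K)
    (hne : K.Nonempty) {u : Z2} (hu : u ≠ 0) :
    IsGreatest (cov K '' suppSet (Function.support (cov K)) (toR u))
      (min (suppSet K (toR u)).ncard (suppSet K (-toR u)).ncard) := by
  rw [support_cov hfin, suppSet_sub (suppSet_nonempty hfin hne _) (suppSet_nonempty hfin hne _)]
  refine ⟨?_, ?_⟩
  · obtain ⟨e, he0, p, q, n, m, hp, hq⟩ := exists_suppSet_pair_eq_latticeSeg hfin hconv hne hu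
    have hpF : p ∈ suppSet K (toR u) := hp ▸ ⟨0, by simp, by simp⟩
    have hqF : q ∈ suppSet K (-toR u) := hq ▸ ⟨0, by simp, by simp⟩
    -- translating `F(K, -u)` by `p - q` aligns the starting points of the two segments
    refine ⟨p - q, Set.sub_mem_sub hpF hqF, ?_⟩
    rw [cov, inter_image_add_sub_eq hpF hqF, hp, hq, image_add_latticeSeg, add_sub_cancel,
      latticeSeg_inter_latticeSeg he0, ncard_latticeSeg he0, ncard_latticeSeg he0,
      ncard_latticeSeg he0, Nat.add_min_add_right]
  · rintro _ ⟨_, ⟨x, hx, y, hy, rfl⟩, rfl⟩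
    exact cov_sub_le_min hfin hx hy

noncomputable def suppCardPair (K : Set Z2) (u : Z2) : Sym2 ℕ :=
  s((suppSet K (toR u)).ncard, (suppSet K (toR (-u))).ncard)

lemma sym2_eq_of_add_eq_of_min_eq {a b c d : ℕ} (hadd : a + b = c + d)
    (hmin : min a b = min c d) : s(a, b) = s(c, d) :=
  Sym2.eq_iff.2 (by omega)

theorem suppCardPair_eq_of_cov_eq (hKfin : K.Finite) (hLfin : L.Finite)
    (hKconv : latticeConvex K) (hLconv : latticeConvex L) (hcov : cov K = cov L) :
    suppCardPair K = suppCardPair L := by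
  have hcard : K.ncard = L.ncard := by rw [← cov_zero, ← cov_zero, hcov]
  rcases K.eq_empty_or_nonempty with rfl | hKne
  · rw [Set.ncard_empty, eq_comm, Set.ncard_eq_zero hLfin] at hcard
    rw [hcard]
  have hLne : L.Nonempty := by
    rw [← Set.ncard_pos hLfin, ← hcard]
    exact (Set.ncard_pos hKfin).2 hKne
  funext u
  rcases eq_or_ne u 0 with rfl | hu
  · simp only [suppCardPair, neg_zero, toR_zero, suppSet_zero, hcard]
  rw [suppCardPair, suppCardPair, toR_neg]
  apply sym2_eq_of_add_eq_of_min_eq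
  · have hK := ncard_suppSet_support_cov hKfin hKconv hKne hu
    rw [hcov, ncard_suppSet_support_cov hLfin hLconv hLne hu] at hK
    omega
  · have hK := isGreatest_cov_image_suppSet_support_cov hKfin hKconv hKne hu
    rw [hcov] at hK
    exact hK.unique (isGreatest_cov_image_suppSet_support_cov hLfin hLconv hLne hu)

end CovariogramDeterminesSupportSets

section Invariants

variable {K L : Set Z2}

lemma primitive_neg {u : Z2} : primitive (-u) ↔ primitive u := by
  simp [primitive]

lemma exists_eq_or_eq_neg_of_suppCardPair_eq {u : Z2}
    (h : suppCardPair K u = suppCardPair L u) :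
    ∃ w, (w = u ∨ w = -u) ∧ (suppSet K (toR w)).ncard = (suppSet L (toR u)).ncard ∧
      (suppSet K (toR (-w))).ncard = (suppSet L (toR (-u))).ncard := by
  rcases Sym2.eq_iff.1 h with ⟨h₁, h₂⟩ | ⟨h₁, h₂⟩
  · exact ⟨u, Or.inl rfl, h₁, h₂⟩
  · exact ⟨-u, Or.inr rfl, h₂, by rwa [neg_neg]⟩

lemma mOne_le_of_suppCardPair_eq (h : suppCardPair K = suppCardPair L) : mOne K ≤ mOne L := by
  refine le_iInf₂ fun u ⟨hprim, hu, hedge⟩ => ?_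
  obtain ⟨w, hw, hw₁, -⟩ := exists_eq_or_eq_neg_of_suppCardPair_eq (congrFun h u)
  have hwK : w ∈ normals K := by
    refine ⟨?_, ?_, hw₁ ▸ hedge⟩ <;> rcases hw with rfl | rfl <;> simpa [primitive_neg]
  exact hw₁ ▸ iInf₂_le w hwK

lemma mTwo_le_of_suppCardPair_eq (h : suppCardPair K = suppCardPair L) : mTwo K ≤ mTwo L := by
  refine le_iInf₂ fun u ⟨hu, h₁, h₂⟩ => ?_
  obtain ⟨w, hw, hw₁, hw₂⟩ := exists_eq_or_eq_neg_of_suppCardPair_eq (congrFun h u)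
  have hw0 : w ≠ 0 := by rcases hw with rfl | rfl <;> simpa using hu
  calc mTwo K ≤ _ := iInf₂_le w ⟨hw0, hw₂ ▸ h₁, hw₁ ▸ hw₂ ▸ h₂⟩
    _ = _ := by rw [hw₁, hw₂]

lemma ncard_suppSet_negSet (K : Set Z2) (u : R2) :
    (suppSet (negSet K) u).ncard = (suppSet K (-u)).ncard := by
  have hneg : ∀ x : Z2, dotR (toR (-x)) u = dotR (toR x) (-u) := by
    intro x
    simp only [dotR, toR_neg, Prod.fst_neg, Prod.snd_neg]
    ring
  have : suppSet (negSet K) u = (fun x => -x) '' suppSet K (-u) := by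
    ext x
    simp only [suppSet, negSet, Set.mem_image, Set.mem_ofPred_eq, forall_exists_index, and_imp,
      forall_apply_eq_imp_iff₂, hneg]
    constructor
    · rintro ⟨⟨y, hy, rfl⟩, hmax⟩
      exact ⟨y, ⟨hy, fun z hz => (hmax z hz).trans_eq (hneg y)⟩, rfl⟩
    · rintro ⟨y, ⟨hy, hmax⟩, rfl⟩
      exact ⟨⟨y, hy, rfl⟩, fun z hz => (hmax z hz).trans_eq (hneg y).symm⟩
  rw [this, Set.ncard_image_of_injective _ neg_injective]

lemma mem_normals_union_negSet_iff {u : Z2} :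
    u ∈ normals K ∪ normals (negSet K) ↔ primitive u ∧ u ≠ 0 ∧ ∃ a ∈ suppCardPair K u, 1 < a := by
  simp only [Set.mem_union, normals, isEdge, Set.mem_ofPred_eq, ncard_suppSet_negSet, ← toR_neg,
    suppCardPair, Sym2.mem_iff, exists_eq_or_imp, exists_eq_left]
  tauto

lemma normals_negSet (K : Set Z2) : normals (negSet K) = -normals K := by
  ext u
  simp only [Set.mem_neg, normals, isEdge, Set.mem_ofPred_eq, ncard_suppSet_negSet, ← toR_neg,
    primitive_neg, ne_eq, neg_eq_zero]

lemma natAbs_detZ_neg_left (u v : Z2) : (detZ (-u) v).natAbs = (detZ u v).natAbs := by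
  rw [← Int.natAbs_neg]
  congr 1
  simp only [detZ, Prod.fst_neg, Prod.snd_neg]
  ring

lemma natAbs_detZ_neg_right (u v : Z2) : (detZ u (-v)).natAbs = (detZ u v).natAbs := by
  rw [← Int.natAbs_neg]
  congr 1
  simp only [detZ, Prod.fst_neg, Prod.snd_neg]
  ring

lemma Dset_union_neg (U : Set Z2) : Dset (U ∪ -U) = Dset U := by
  refine subset_antisymm ?_ fun d ⟨hd, u, hu, v, hv, hdet⟩ => ⟨hd, u, Or.inl hu, v, Or.inl hv, hdet⟩
  rintro d ⟨hd, u, hu, v, hv, rfl⟩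
  rcases hu with hu | hu <;> rcases hv with hv | hv
  · exact ⟨hd, u, hu, v, hv, rfl⟩
  · exact ⟨hd, u, hu, -v, hv, by rw [natAbs_detZ_neg_right]⟩
  · exact ⟨hd, -u, hu, v, hv, by rw [natAbs_detZ_neg_left]⟩
  · exact ⟨hd, -u, hu, -v, hv, by rw [natAbs_detZ_neg_left, natAbs_detZ_neg_right]⟩

lemma discK_eq_of_normals_union_negSet_eq
    (h : normals K ∪ normals (negSet K) = normals L ∪ normals (negSet L)) :
    discK K = discK L := by
  rw [discK, discK, disc, disc, ← Dset_union_neg, ← Dset_union_neg (normals L),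
    ← normals_negSet, ← normals_negSet, h]

end Invariants

theorem covariogram_determines_invariants_general
    (K L : Set Z2) (hKfin : K.Finite) (hLfin : L.Finite)
    (hKconv : latticeConvex K) (hLconv : latticeConvex L)
    (hcov : cov K = cov L) :
    mOne K = mOne L ∧ mTwo K = mTwo L ∧ mm K = mm L ∧
      normals K ∪ normals (negSet K) = normals L ∪ normals (negSet L) ∧
      discK K = discK L := by
  have h := suppCardPair_eq_of_cov_eq hKfin hLfin hKconv hLconv hcov
  have h₁ : mOne K = mOne L :=
    le_antisymm (mOne_le_of_suppCardPair_eq h) (mOne_le_of_suppCardPair_eq h.symm)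
  have h₂ : mTwo K = mTwo L :=
    le_antisymm (mTwo_le_of_suppCardPair_eq h) (mTwo_le_of_suppCardPair_eq h.symm)
  have hU : normals K ∪ normals (negSet K) = normals L ∪ normals (negSet L) := by
    ext u
    rw [mem_normals_union_negSet_iff, mem_normals_union_negSet_iff, h]
  exact ⟨h₁, h₂, by rw [mm, mm, h₁, h₂], hU, discK_eq_of_normals_union_negSet_eq hU⟩

/-- If `K, L ∈ 𝒦(ℤ²)` have equal covariograms, then
`m'(K) = m'(L)`, `m''(K) = m''(L)`, `m(K) = m(L)`,
`U(K) ∪ U(−K) = U(L) ∪ U(−L)` and `δ(K) = δ(L)`. -/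
theorem covariogram_determines_invariants
    (K L : Set Z2) (hKfin : K.Finite) (hLfin : L.Finite)
    (hKconv : latticeConvex K) (hLconv : latticeConvex L)
    (hKspan : spans K) (hLspan : spans L)
    (hcov : cov K = cov L) :
    mOne K = mOne L ∧ mTwo K = mTwo L ∧ mm K = mm L ∧
      normals K ∪ normals (negSet K) = normals L ∪ normals (negSet L) ∧
      discK K = discK L :=
  covariogram_determines_invariants_general K L hKfin hLfin hKconv hLconv hcov
end

section
/- With T, w₁, w₂, and 𝕃 as fixed, one has ℤ² = 𝕃 ⊕ T: every point of ℤ² can be written in exactly one way as w + t with w ∈ 𝕃 and t ∈ T. -/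
open scoped Pointwise ENNReal

/-!
The functional `p ↦ det(p, w₂) = p.1 - (ℓ+1) p.2` vanishes on `w₂` and sends `w₁` to
`-(k+ℓ+2)`, so `𝕃` is exactly the set of points where it is divisible by `k+ℓ+2`. On `T` it
takes every value of the window `[-(ℓ+1), k]`, whose length is `k+ℓ+2`, exactly once. Hence
for each `p` exactly one `t ∈ T` has `p - t ∈ 𝕃`: the one whose value is the representative
of `det(p, w₂)` modulo `k+ℓ+2` in that window.
-/
theorem Int.existsUnique_mem_Ico_dvd_sub {N : ℤ} (hN : 0 < N) (a x : ℤ) :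
    ∃! c, c ∈ Set.Ico a (a + N) ∧ N ∣ x - c := by
  have hlo := Int.emod_nonneg (x - a) hN.ne'
  have hhi := Int.emod_lt_of_pos (x - a) hN
  have hdvd : N ∣ x - (a + (x - a) % N) := by
    rw [← sub_sub]
    exact Int.dvd_self_sub_emod
  refine ⟨a + (x - a) % N, ⟨⟨by omega, by omega⟩, hdvd⟩, fun c ⟨⟨hac, hcN⟩, hc⟩ => ?_⟩
  have hdiff : N ∣ c - (a + (x - a) % N) := by
    simpa only [sub_sub_sub_cancel_left] using dvd_sub hdvd hc
  have := Int.eq_zero_of_abs_lt_dvd hdiff (abs_lt.mpr ⟨by omega, by omega⟩)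
  omega

theorem existsUnique_add_decomposition_iff {G : Type*} [AddGroup G] (L T : Set G) (p : G) :
    (∃! q : G × G, q.1 ∈ L ∧ q.2 ∈ T ∧ p = q.1 + q.2) ↔ ∃! t, t ∈ T ∧ p - t ∈ L := by
  constructor
  · rintro ⟨⟨w, t⟩, ⟨hw, ht, rfl⟩, huniq⟩
    refine ⟨t, ⟨ht, by simpa using hw⟩, fun t' ⟨ht', hw'⟩ => ?_⟩
    exact congrArg Prod.snd (huniq (w + t - t', t') ⟨hw', ht', by simp⟩)
  · rintro ⟨t, ⟨ht, hw⟩, huniq⟩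
    refine ⟨(p - t, t), ⟨hw, ht, by simp⟩, ?_⟩
    rintro ⟨w', t'⟩ ⟨hw', ht', rfl⟩
    obtain rfl := huniq t' ⟨ht', by simpa using hw'⟩
    simp

theorem Set.BijOn.existsUnique_iff {α β : Type*} {f : α → β} {s : Set α} {t : Set β}
    (h : Set.BijOn f s t) {P : β → Prop} :
    (∃! b, b ∈ t ∧ P b) ↔ ∃! a, a ∈ s ∧ P (f a) := by
  constructor
  · rintro ⟨b, ⟨hb, hPb⟩, huniq⟩
    obtain ⟨a, ha, rfl⟩ := h.surjOn hb
    exact ⟨a, ⟨ha, hPb⟩, fun a' ⟨ha', hPa'⟩ => h.injOn ha' ha (huniq _ ⟨h.mapsTo ha', hPa'⟩)⟩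
  · rintro ⟨a, ⟨ha, hPa⟩, huniq⟩
    refine ⟨f a, ⟨h.mapsTo ha, hPa⟩, fun b ⟨hb, hPb⟩ => ?_⟩
    obtain ⟨a', ha', rfl⟩ := h.surjOn hb
    rw [huniq a' ⟨ha', hPb⟩]

theorem detZ_wTwo (l : ℤ) (p : Z2) : detZ p (wTwo l) = p.1 - (l + 1) * p.2 := by
  simp only [detZ, wTwo]
  ring

theorem detZ_sub_left (u v w : Z2) : detZ (u - v) w = detZ u w - detZ v w := by
  simp only [detZ, Prod.fst_sub, Prod.snd_sub]
  ring

theorem mem_ZLat_iff (k l : ℤ) (p : Z2) : p ∈ ZLat k l ↔ k + l + 2 ∣ detZ p (wTwo l) := by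
  rw [detZ_wTwo]
  constructor
  · rintro ⟨a, b, rfl⟩
    exact ⟨-a, by simp only [wOne, wTwo, Prod.smul_mk, Prod.mk_add_mk, smul_eq_mul]; ring⟩
  · rintro ⟨m, hm⟩
    refine ⟨-m, p.2 + m, Prod.ext ?_ ?_⟩ <;>
      simp only [wOne, wTwo, Prod.smul_mk, Prod.mk_add_mk, smul_eq_mul]
    · linear_combination hm
    · ring

theorem bijOn_detZ_wTwo_Tset {k l : ℤ} (hk : 0 ≤ k) (hl : 0 ≤ l) :
    Set.BijOn (fun t => detZ t (wTwo l)) (Tset k l) (Set.Icc (-(l + 1)) k) := by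
  refine ⟨?_, ?_, ?_⟩
  · rintro ⟨x, y⟩ (⟨h0, hx, rfl⟩ | ⟨h0, hx, rfl⟩) <;> dsimp only at h0 hx <;>
      simp only [detZ_wTwo, Set.mem_Icc] <;> omega
  · rintro ⟨x, y⟩ (⟨h0, hx, rfl⟩ | ⟨h0, hx, rfl⟩) ⟨x', y'⟩ (⟨h0', hx', rfl⟩ | ⟨h0', hx', rfl⟩) h <;>
      dsimp only at h0 hx h0' hx' <;> simp only [detZ_wTwo] at h <;>
      simp only [Prod.mk.injEq, and_true] <;> omega
  · rintro c ⟨h1, h2⟩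
    rcases lt_or_ge c 0 with hc | hc
    · exact ⟨(c + l + 1, 1), Or.inr ⟨by omega, by omega, rfl⟩, by simp only [detZ_wTwo]; ring⟩
    · exact ⟨(c, 0), Or.inl ⟨hc, h2, rfl⟩, by simp only [detZ_wTwo]; ring⟩

/-- `ℤ² = 𝕃 ⊕ T`: every point of `ℤ²` has a unique representation
`w + t` with `w ∈ 𝕃` and `t ∈ T`. -/
theorem lattice_T_decomposition
    (k l : ℤ) (hl : 0 ≤ l) (hkl : l < k) :
    ∀ p : Z2, ∃! q : Z2 × Z2, q.1 ∈ ZLat k l ∧ q.2 ∈ Tset k l ∧ p = q.1 + q.2 := by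
  intro p
  have hwindow : Set.Ico (-(l + 1)) (-(l + 1) + (k + l + 2)) = Set.Icc (-(l + 1)) k := by
    ext c
    simp only [Set.mem_Ico, Set.mem_Icc]
    omega
  have hresidue :=
    Int.existsUnique_mem_Ico_dvd_sub (by omega : 0 < k + l + 2) (-(l + 1)) (detZ p (wTwo l))
  rw [hwindow, (bijOn_detZ_wTwo_Tset (by omega) hl).existsUnique_iff] at hresidue
  rw [existsUnique_add_decomposition_iff]
  simpa only [mem_ZLat_iff, detZ_sub_left] using hresidue
end

section
/- Let S ⊆ ℤ² be such that the sum of S and T is direct and K := S ⊕ T is lattice-convex. Then for each h ∈ ℤ the elements of 𝒯₁ and 𝒯₂ alternate in 𝒯(h) with respect to the left-to-right order: for any two distinct J, J' ∈ 𝒯(h) that both belong to 𝒯₁ (respectively, both belong to 𝒯₂) with J strictly preceding J', there exists J'' ∈ 𝒯(h) belonging to 𝒯₂ (respectively, to 𝒯₁) that strictly follows J and strictly precedes J'. -/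
open scoped Pointwise ENNReal

/-!
Rows of `K = S ⊕ T` are intervals, and by directness the tiles `s + T₁`, `s + T₂` (`s ∈ S`) cut
each row into disjoint segments, so the segment following a tile `J` starts exactly one step to
the right of `J`. It therefore suffices to see that two tiles of the same kind are never adjacent.
Adjacent `T₂`-tiles `s + T₂`, `s + (ℓ + 1, 0) + T₂` are impossible because `ℓ < k` makes the
`T₁`-tiles below them overlap. Adjacent `T₁`-tiles `s + T₁`, `s + (k + 1, 0) + T₁` leave a gap of
length `k - ℓ` between their `T₂`-tiles in the row above; the segment starting that gap can be
neither a `T₂`-tile (adjacent `T₂`-tiles) nor a `T₁`-tile (longer than `k - ℓ`).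
-/

open Set

lemma latticeConvex.mem_of_le_of_le {K : Set Z2} (hK : latticeConvex K) {a b x h : ℤ}
    (ha : ((a, h) : Z2) ∈ K) (hb : ((b, h) : Z2) ∈ K) (hax : a ≤ x) (hxb : x ≤ b) :
    ((x, h) : Z2) ∈ K := by
  obtain ⟨C, hC, rfl⟩ := hK
  have hseg : toR (x, h) ∈ segment ℝ (toR (a, h)) (toR (b, h)) := by
    rw [toR, toR, toR, ← Prod.image_mk_segment_left,
      segment_eq_Icc (by exact_mod_cast hax.trans hxb)]
    exact ⟨x, ⟨by exact_mod_cast hax, by exact_mod_cast hxb⟩, rfl⟩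
  exact hC.segment_subset ha hb hseg

lemma Icc_prod_singleton_eq_iff {a b c d h h' : ℤ} (hab : a ≤ b) :
    Icc a b ×ˢ ({h} : Set ℤ) = Icc c d ×ˢ {h'} ↔ a = c ∧ b = d ∧ h = h' := by
  rw [prod_eq_prod_iff_of_nonempty ⟨(a, h), mk_mem_prod (left_mem_Icc.2 hab) (mem_singleton h)⟩,
    Icc_eq_Icc_iff hab, singleton_eq_singleton_iff, and_assoc]

lemma precedes_Icc_prod_iff {a b c d h h' : ℤ} (hab : a ≤ b) (hcd : c ≤ d) :
    precedes (Icc a b ×ˢ {h}) (Icc c d ×ˢ {h'}) ↔ b < c :=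
  ⟨fun hp => hp (b, h) (mk_mem_prod ⟨hab, le_rfl⟩ rfl) (c, h') (mk_mem_prod ⟨le_rfl, hcd⟩ rfl),
    fun hbc _ hp _ hq => by linarith [hp.1.2, hq.1.1]⟩

/-- The point `(b + 1, h)` lies in `⋃₀ 𝒥` by convexity; the segment containing it cannot meet `J`,
and it meets `J'` only if it is `J'`. -/
theorem exists_Icc_prod_succ_mem {𝒥 : Set (Set Z2)} (hconv : latticeConvex (⋃₀ 𝒥))
    (hdisj : 𝒥.PairwiseDisjoint id) (hseg : ∀ J ∈ 𝒥, ∃ a b h, J = Icc a b ×ˢ {h})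
    {a b a' b' h : ℤ} (hab : a ≤ b) (ha'b' : a' ≤ b') (hJ : Icc a b ×ˢ {h} ∈ 𝒥)
    (hJ' : Icc a' b' ×ˢ {h} ∈ 𝒥) (hlt : b < a') :
    b + 1 = a' ∨ ∃ d, b + 1 ≤ d ∧ d < a' ∧ Icc (b + 1) d ×ˢ {h} ∈ 𝒥 := by
  have hbJ : ((b, h) : Z2) ∈ Icc a b ×ˢ {h} := mk_mem_prod ⟨hab, le_rfl⟩ rfl
  have ha'J' : ((a', h) : Z2) ∈ Icc a' b' ×ˢ {h} := mk_mem_prod ⟨le_rfl, ha'b'⟩ rfl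
  obtain ⟨J'', hJ'', hmem⟩ : ((b + 1, h) : Z2) ∈ ⋃₀ 𝒥 :=
    hconv.mem_of_le_of_le (mem_sUnion_of_mem hbJ hJ) (mem_sUnion_of_mem ha'J' hJ')
      (by omega) (by omega)
  obtain ⟨c, d, h'', rfl⟩ := hseg J'' hJ''
  obtain ⟨⟨hc, hd⟩, rfl⟩ := hmem
  have hcb : c = b + 1 := by
    by_contra hne
    have hJJ'' := hdisj.elim_set hJ hJ'' (b, h) hbJ (mk_mem_prod ⟨by omega, by omega⟩ rfl)
    have : b + 1 ≤ b :=
      (hJJ'' ▸ mk_mem_prod ⟨hc, hd⟩ rfl : ((b + 1, h) : Z2) ∈ Icc a b ×ˢ {h}).1.2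
    omega
  subst hcb
  by_cases hlast : a' ≤ b + 1
  · exact Or.inl (by omega)
  refine Or.inr ⟨d, hd, ?_, hJ''⟩
  by_contra! hda
  have hJ''J' := hdisj.elim_set hJ'' hJ' (a', h) (mk_mem_prod ⟨by omega, hda⟩ rfl) ha'J'
  have : a' ≤ b + 1 :=
    (hJ''J' ▸ mk_mem_prod ⟨le_rfl, hd⟩ rfl : ((b + 1, h) : Z2) ∈ Icc a' b' ×ˢ {h}).1.1
  omega

lemma directSum.eq_of_mem_transl {S T A B : Set Z2} (hdir : directSum S T) (hA : A ⊆ T)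
    (hB : B ⊆ T) {s t p : Z2} (hs : s ∈ S) (ht : t ∈ S) (hpA : p ∈ transl s A)
    (hpB : p ∈ transl t B) : s = t := by
  obtain ⟨u, hu, rfl⟩ := hpA
  obtain ⟨v, hv, hvu⟩ := hpB
  exact (hdir t ht s hs v (hB hv) u (hA hu) hvu).1.symm

/-- `𝒯₁ ∪ 𝒯₂`. -/
def tiles (k l : ℤ) (S : Set Z2) : Set (Set Z2) :=
  {J | ∃ s ∈ S, J = transl s (T1set k) ∨ J = transl s (T2set l)}

section Tiles

variable {k l : ℤ} {S : Set Z2}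

lemma transl_T1set (s : Z2) (k : ℤ) : transl s (T1set k) = Icc s.1 (s.1 + k) ×ˢ {s.2} := by
  ext ⟨x, y⟩
  simp only [transl, T1set, mem_image, mem_ofPred_eq, mem_prod, mem_Icc, mem_singleton_iff]
  constructor
  · rintro ⟨⟨u, v⟩, ⟨h0, hk, rfl⟩, h⟩
    simp only [Prod.ext_iff, Prod.fst_add, Prod.snd_add] at h
    omega
  · rintro ⟨⟨h0, hk⟩, rfl⟩
    exact ⟨(x - s.1, 0), ⟨by omega, by omega, rfl⟩, by ext <;> simp⟩

lemma transl_T2set (s : Z2) (l : ℤ) : transl s (T2set l) = Icc s.1 (s.1 + l) ×ˢ {s.2 + 1} := by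
  ext ⟨x, y⟩
  simp only [transl, T2set, mem_image, mem_ofPred_eq, mem_prod, mem_Icc, mem_singleton_iff]
  constructor
  · rintro ⟨⟨u, v⟩, ⟨h0, hl, rfl⟩, h⟩
    simp only [Prod.ext_iff, Prod.fst_add, Prod.snd_add] at h
    omega
  · rintro ⟨⟨h0, hl⟩, rfl⟩
    exact ⟨(x - s.1, 1), ⟨by omega, by omega, rfl⟩, by ext <;> simp⟩

lemma sUnion_tiles (k l : ℤ) (S : Set Z2) : ⋃₀ tiles k l S = S + Tset k l := by
  ext p
  constructor
  · rintro ⟨J, ⟨s, hs, rfl | rfl⟩, u, hu, rfl⟩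
    exacts [add_mem_add hs (Or.inl hu), add_mem_add hs (Or.inr hu)]
  · rintro ⟨s, hs, u, hu | hu, rfl⟩
    exacts [⟨_, ⟨s, hs, Or.inl rfl⟩, u, hu, rfl⟩, ⟨_, ⟨s, hs, Or.inr rfl⟩, u, hu, rfl⟩]

lemma pairwiseDisjoint_tiles (hdir : directSum S (Tset k l)) :
    (tiles k l S).PairwiseDisjoint id := by
  rintro J ⟨s, hs, hJ⟩ J' ⟨t, ht, hJ'⟩ hne
  refine disjoint_left.2 fun _ hp hp' => hne ?_
  rcases hJ with rfl | rfl <;> rcases hJ' with rfl | rfl <;>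
    obtain rfl := hdir.eq_of_mem_transl (by simp [Tset]) (by simp [Tset]) hs ht hp hp' <;>
    simp only [id, transl_T1set, transl_T2set, mem_prod, mem_singleton_iff] at hp hp' ⊢ <;>
    omega

lemma exists_eq_Icc_prod_of_mem_tiles : ∀ J ∈ tiles k l S, ∃ a b h, J = Icc a b ×ˢ {h} := by
  rintro J ⟨s, -, rfl | rfl⟩
  exacts [⟨_, _, _, transl_T1set s k⟩, ⟨_, _, _, transl_T2set s l⟩]

lemma Icc_prod_mem_TcalSet {a b h : ℤ} (hJ : Icc a b ×ˢ {h} ∈ tiles k l S) :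
    Icc a b ×ˢ {h} ∈ TcalSet k l S h :=
  ⟨hJ, fun _ hp => ⟨sUnion_tiles k l S ▸ mem_sUnion_of_mem hp hJ, (mem_prod.1 hp).2⟩⟩

lemma eq_of_Icc_prod_mem_TcalSet {a b h h' : ℤ} (hab : a ≤ b)
    (hJ : Icc a b ×ˢ {h'} ∈ TcalSet k l S h) : h' = h :=
  (hJ.2 (mk_mem_prod ⟨le_rfl, hab⟩ rfl : ((a, h') : Z2) ∈ Icc a b ×ˢ {h'})).2

lemma exists_Icc_prod_succ_mem_tiles (hdir : directSum S (Tset k l))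
    (hconv : latticeConvex (S + Tset k l)) {a b a' b' h : ℤ} (hab : a ≤ b) (ha'b' : a' ≤ b')
    (hJ : Icc a b ×ˢ {h} ∈ tiles k l S) (hJ' : Icc a' b' ×ˢ {h} ∈ tiles k l S) (hlt : b < a') :
    b + 1 = a' ∨ ∃ d, b + 1 ≤ d ∧ d < a' ∧ Icc (b + 1) d ×ˢ {h} ∈ tiles k l S :=
  exists_Icc_prod_succ_mem (sUnion_tiles k l S ▸ hconv) (pairwiseDisjoint_tiles hdir)
    exists_eq_Icc_prod_of_mem_tiles hab ha'b' hJ hJ' hlt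

lemma add_l_succ_notMem (hdir : directSum S (Tset k l)) (hl : 0 ≤ l) (hkl : l < k) {s : Z2}
    (hs : s ∈ S) : s + (l + 1, 0) ∉ S := fun ht => by
  have hst := hdir s hs _ ht (l + 1, 0) (Or.inl ⟨by omega, by omega, rfl⟩) (0, 0)
    (Or.inl ⟨le_rfl, by omega, rfl⟩) (by simp)
  have := congrArg Prod.fst hst.1
  simp only [Prod.fst_add] at this
  omega

lemma add_k_succ_notMem (hdir : directSum S (Tset k l)) (hconv : latticeConvex (S + Tset k l))
    (hl : 0 ≤ l) (hkl : l < k) {s : Z2} (hs : s ∈ S) : s + (k + 1, 0) ∉ S := fun ht => by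
  have hJ : transl s (T2set l) ∈ tiles k l S := ⟨s, hs, Or.inr rfl⟩
  have hJ' : transl (s + (k + 1, 0)) (T2set l) ∈ tiles k l S := ⟨_, ht, Or.inr rfl⟩
  rw [transl_T2set] at hJ hJ'
  simp only [Prod.fst_add, Prod.snd_add, add_zero] at hJ'
  rcases exists_Icc_prod_succ_mem_tiles hdir hconv (by omega) (by omega) hJ hJ' (by omega) with
    hadj | ⟨d, hd, hda, r, hr, hT | hT⟩
  · omega
  · rw [transl_T1set, Icc_prod_singleton_eq_iff hd] at hT
    omega
  · rw [transl_T2set, Icc_prod_singleton_eq_iff hd] at hT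
    obtain rfl : r = s + (l + 1, 0) :=
      Prod.ext (by simp only [Prod.fst_add]; omega) (by simp only [Prod.snd_add]; omega)
    exact add_l_succ_notMem hdir hl hkl hs hr

lemma exists_T2set_between (hdir : directSum S (Tset k l)) (hconv : latticeConvex (S + Tset k l))
    (hl : 0 ≤ l) (hkl : l < k) {h : ℤ} {s s' : Z2} (hs : s ∈ S) (hs' : s' ∈ S)
    (hJ : transl s (T1set k) ∈ TcalSet k l S h) (hJ' : transl s' (T1set k) ∈ TcalSet k l S h)
    (hprec : precedes (transl s (T1set k)) (transl s' (T1set k))) :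
    ∃ t ∈ S, transl t (T2set l) ∈ TcalSet k l S h ∧
      precedes (transl s (T1set k)) (transl t (T2set l)) ∧
      precedes (transl t (T2set l)) (transl s' (T1set k)) := by
  simp only [transl_T1set] at hJ hJ' hprec ⊢
  obtain rfl := eq_of_Icc_prod_mem_TcalSet (by omega) hJ
  have hrow := eq_of_Icc_prod_mem_TcalSet (by omega) hJ'
  rw [hrow] at hJ' ⊢
  rw [precedes_Icc_prod_iff (by omega) (by omega)] at hprec
  have hnext := add_k_succ_notMem hdir hconv hl hkl hs
  rcases exists_Icc_prod_succ_mem_tiles hdir hconv (by omega) (by omega) hJ.1 hJ'.1 hprec with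
    hadj | ⟨d, hd, hda, t, ht, hT | hT⟩
  · obtain rfl : s' = s + (k + 1, 0) :=
      Prod.ext (by simp only [Prod.fst_add]; omega) (by simp only [Prod.snd_add]; omega)
    exact (hnext hs').elim
  · rw [transl_T1set, Icc_prod_singleton_eq_iff hd] at hT
    obtain rfl : t = s + (k + 1, 0) :=
      Prod.ext (by simp only [Prod.fst_add]; omega) (by simp only [Prod.snd_add]; omega)
    exact (hnext ht).elim
  · refine ⟨t, ht, ?_⟩
    rw [← hT]
    exact ⟨Icc_prod_mem_TcalSet ⟨t, ht, Or.inr hT⟩,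
      (precedes_Icc_prod_iff (by omega) hd).2 (by omega),
      (precedes_Icc_prod_iff hd (by omega)).2 hda⟩

lemma exists_T1set_between (hdir : directSum S (Tset k l)) (hconv : latticeConvex (S + Tset k l))
    (hl : 0 ≤ l) (hkl : l < k) {h : ℤ} {s s' : Z2} (hs : s ∈ S) (hs' : s' ∈ S)
    (hJ : transl s (T2set l) ∈ TcalSet k l S h) (hJ' : transl s' (T2set l) ∈ TcalSet k l S h)
    (hprec : precedes (transl s (T2set l)) (transl s' (T2set l))) :
    ∃ t ∈ S, transl t (T1set k) ∈ TcalSet k l S h ∧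
      precedes (transl s (T2set l)) (transl t (T1set k)) ∧
      precedes (transl t (T1set k)) (transl s' (T2set l)) := by
  simp only [transl_T2set] at hJ hJ' hprec ⊢
  obtain rfl := eq_of_Icc_prod_mem_TcalSet (by omega) hJ
  have hrow := eq_of_Icc_prod_mem_TcalSet (by omega) hJ'
  rw [hrow] at hJ' ⊢
  rw [precedes_Icc_prod_iff (by omega) (by omega)] at hprec
  have hnext := add_l_succ_notMem hdir hl hkl hs
  rcases exists_Icc_prod_succ_mem_tiles hdir hconv (by omega) (by omega) hJ.1 hJ'.1 hprec with
    hadj | ⟨d, hd, hda, t, ht, hT | hT⟩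
  · obtain rfl : s' = s + (l + 1, 0) :=
      Prod.ext (by simp only [Prod.fst_add]; omega) (by simp only [Prod.snd_add]; omega)
    exact (hnext hs').elim
  · refine ⟨t, ht, ?_⟩
    rw [← hT]
    exact ⟨Icc_prod_mem_TcalSet ⟨t, ht, Or.inl hT⟩,
      (precedes_Icc_prod_iff (by omega) hd).2 (by omega),
      (precedes_Icc_prod_iff hd (by omega)).2 hda⟩
  · rw [transl_T2set, Icc_prod_singleton_eq_iff hd] at hT
    obtain rfl : t = s + (l + 1, 0) :=
      Prod.ext (by simp only [Prod.fst_add]; omega) (by simp only [Prod.snd_add]; omega)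
    exact (hnext ht).elim

end Tiles

/-- in every horizontal section the members of `𝒯₁` and `𝒯₂`
alternate. -/
theorem sections_alternate
    (k l : ℤ) (hl : 0 ≤ l) (hkl : l < k)
    (S : Set Z2) (hdir : directSum S (Tset k l))
    (hconv : latticeConvex (S + Tset k l)) :
    ∀ h : ℤ, ∀ J J' : Set Z2, J ∈ TcalSet k l S h → J' ∈ TcalSet k l S h → J ≠ J' →
      (((∃ s ∈ S, J = transl s (T1set k)) → (∃ s ∈ S, J' = transl s (T1set k)) →
        precedes J J' →
        ∃ J'' ∈ TcalSet k l S h, (∃ s ∈ S, J'' = transl s (T2set l)) ∧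
          precedes J J'' ∧ precedes J'' J') ∧
      ((∃ s ∈ S, J = transl s (T2set l)) → (∃ s ∈ S, J' = transl s (T2set l)) →
        precedes J J' →
        ∃ J'' ∈ TcalSet k l S h, (∃ s ∈ S, J'' = transl s (T1set k)) ∧
          precedes J J'' ∧ precedes J'' J')) := by
  intro h J J' hJ hJ' _
  constructor
  · rintro ⟨s, hs, rfl⟩ ⟨s', hs', rfl⟩ hprec
    obtain ⟨t, ht, hJ'', hJJ'', hJ''J'⟩ :=
      exists_T2set_between hdir hconv hl hkl hs hs' hJ hJ' hprec
    exact ⟨_, hJ'', ⟨t, ht, rfl⟩, hJJ'', hJ''J'⟩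
  · rintro ⟨s, hs, rfl⟩ ⟨s', hs', rfl⟩ hprec
    obtain ⟨t, ht, hJ'', hJJ'', hJ''J'⟩ :=
      exists_T1set_between hdir hconv hl hkl hs hs' hJ hJ' hprec
    exact ⟨_, hJ'', ⟨t, ht, rfl⟩, hJJ'', hJ''J'⟩
end

section
/- Let S ⊆ ℤ² be such that the sum of S and T is direct and K := S ⊕ T is lattice-convex. Let h ∈ ℤ be such that 𝒯(h) consists of precisely one element, namely s + T₂ with s ∈ S, and 𝒯(h+1) consists of precisely one element, namely s' + T₁ with s' ∈ S. Then k − ℓ = 1 and s' − s = (−1, 2) = w₁ + w₂. -/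
open scoped Pointwise ENNReal

/-! Every point of `K = S + T` lies in a tile `x + Tᵢ` lying in a single row, so when `𝒯(h)` is a
singleton `{J}` the whole row `I_h` is `J`. Hence `I_h = s + T₂` has only `ℓ + 1` points, while `s` sits
at height `h - 1` and `s'` at height `h + 1`, both carrying a row of `k + 1` points of `K`. By lattice
convexity all lattice midpoints of these two rows lie in `I_h`; there are at least `k` of them, and
`k + 1` unless `s.1 + s'.1` is odd, which forces `k = ℓ + 1` and pins `s'.1 = s.1 - 1`. -/

lemma mem_transl {s p : Z2} {A : Set Z2} : p ∈ transl s A ↔ p - s ∈ A := by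
  refine ⟨?_, fun hp => ⟨p - s, hp, add_sub_cancel s p⟩⟩
  rintro ⟨t, ht, rfl⟩
  simpa using ht

lemma latticeConvex.mem_of_add_self_eq {K : Set Z2} (hK : latticeConvex K) {p q m : Z2}
    (hp : p ∈ K) (hq : q ∈ K) (hm : m + m = p + q) : m ∈ K := by
  obtain ⟨C, hC, rfl⟩ := hK
  have h₁ : (m.1 : ℝ) + m.1 = p.1 + q.1 := by exact_mod_cast congrArg Prod.fst hm
  have h₂ : (m.2 : ℝ) + m.2 = p.2 + q.2 := by exact_mod_cast congrArg Prod.snd hm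
  have hmid : toR m = (1 / 2 : ℝ) • toR p + (1 / 2 : ℝ) • toR q := by
    simp only [toR, Prod.smul_mk, Prod.mk_add_mk, smul_eq_mul, Prod.mk.injEq]
    constructor <;> linarith
  rw [Set.mem_preimage, hmid]
  exact hC hp hq (by norm_num) (by norm_num) (by norm_num)

lemma latticeConvex.mem_middle_row {K : Set Z2} (hK : latticeConvex K) {a b y k x : ℤ}
    (hlow : ∀ j, 0 ≤ j → j ≤ k → (a + j, y - 1) ∈ K)
    (hhigh : ∀ j, 0 ≤ j → j ≤ k → (b + j, y + 1) ∈ K)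
    (hx₁ : a + b ≤ 2 * x) (hx₂ : 2 * x ≤ a + b + 2 * k) : (x, y) ∈ K := by
  set n := 2 * x - a - b
  refine hK.mem_of_add_self_eq (hlow (n / 2) (by omega) (by omega))
    (hhigh (n - n / 2) (by omega) (by omega)) ?_
  ext <;> simp only [Prod.fst_add, Prod.snd_add] <;> omega

lemma eq_add_one_and_eq_sub_one_of_midpoints_mem_Icc {a b k l : ℤ} (hl : 0 ≤ l) (hkl : l < k)
    (H : ∀ x, a + b ≤ 2 * x → 2 * x ≤ a + b + 2 * k → x ∈ Set.Icc a (a + l)) :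
    k = l + 1 ∧ b = a - 1 := by
  have hfirst := H ((a + b + 1) / 2) (by omega) (by omega)
  have hlast := H ((a + b) / 2 + k) (by omega) (by omega)
  simp only [Set.mem_Icc] at hfirst hlast
  omega

section Tiles

variable {k l : ℤ} {S : Set Z2}

lemma add_T1set_mem {x : Z2} (hx : x ∈ S) {j : ℤ} (hj₀ : 0 ≤ j) (hjk : j ≤ k) :
    (x.1 + j, x.2) ∈ S + Tset k l := by
  have hT : ((j, 0) : Z2) ∈ Tset k l := Or.inl ⟨hj₀, hjk, rfl⟩
  exact (Prod.ext rfl (add_zero x.2) : x + ((j, 0) : Z2) = (x.1 + j, x.2)) ▸ Set.add_mem_add hx hT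

lemma transl_subset_sect {A : Set Z2} {x : Z2} {c : ℤ} (hx : x ∈ S) (hA : A ⊆ Tset k l)
    (hc : ∀ t ∈ A, t.2 = c) : transl x A ⊆ sect (S + Tset k l) (x.2 + c) := by
  rintro _ ⟨t, ht, rfl⟩
  exact ⟨Set.add_mem_add hx (hA ht), by simp [hc t ht]⟩

lemma exists_mem_TcalSet_of_mem {p : Z2} (hp : p ∈ S + Tset k l) :
    ∃ J ∈ TcalSet k l S p.2, p ∈ J := by
  obtain ⟨x, hx, t, ht | ht, rfl⟩ := hp
  · refine ⟨transl x (T1set k), ⟨⟨x, hx, Or.inl rfl⟩, ?_⟩, ⟨t, ht, rfl⟩⟩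
    simpa [ht.2.2] using transl_subset_sect hx Set.subset_union_left fun t ht => ht.2.2
  · refine ⟨transl x (T2set l), ⟨⟨x, hx, Or.inr rfl⟩, ?_⟩, ⟨t, ht, rfl⟩⟩
    simpa [ht.2.2] using transl_subset_sect hx Set.subset_union_right fun t ht => ht.2.2

lemma sect_eq_of_TcalSet_eq_singleton {h : ℤ} {J : Set Z2} (hJ : TcalSet k l S h = {J}) :
    sect (S + Tset k l) h = J := by
  refine subset_antisymm (fun p hp => ?_) (hJ ▸ Set.mem_singleton J).2
  obtain ⟨J', hJ', hpJ'⟩ := exists_mem_TcalSet_of_mem hp.1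
  rw [hp.2, hJ] at hJ'
  exact Set.mem_singleton_iff.mp hJ' ▸ hpJ'

end Tiles

theorem consecutive_short_sections_general
    (k l : ℤ) (hl : 0 ≤ l) (hkl : l < k)
    (S : Set Z2)
    (hconv : latticeConvex (S + Tset k l))
    (h : ℤ) (s s' : Z2) (hs : s ∈ S) (hs' : s' ∈ S)
    (hh : TcalSet k l S h = {transl s (T2set l)})
    (hh' : TcalSet k l S (h + 1) = {transl s' (T1set k)}) :
    k - l = 1 ∧ s' - s = ((-1 : ℤ), (2 : ℤ)) ∧ s' - s = wOne k + wTwo l := by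
  have hrow := sect_eq_of_TcalSet_eq_singleton hh
  have hs₂ : s.2 = h - 1 := by
    have : (s.1, s.2 + 1) ∈ sect (S + Tset k l) h := hrow ▸ mem_transl.2 (by simp [T2set, hl])
    linarith [this.2]
  have hs'₂ : s'.2 = h + 1 := by
    have : s' ∈ sect (S + Tset k l) (h + 1) :=
      sect_eq_of_TcalSet_eq_singleton hh' ▸ mem_transl.2 (by simp [T1set]; omega)
    exact this.2
  have hmid : ∀ x, s.1 + s'.1 ≤ 2 * x → 2 * x ≤ s.1 + s'.1 + 2 * k →
      x ∈ Set.Icc s.1 (s.1 + l) := by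
    intro x hx₁ hx₂
    have hx : (x, h) ∈ sect (S + Tset k l) h :=
      ⟨hconv.mem_middle_row (fun j hj₀ hjk => hs₂ ▸ add_T1set_mem hs hj₀ hjk)
        (fun j hj₀ hjk => hs'₂ ▸ add_T1set_mem hs' hj₀ hjk) hx₁ hx₂, rfl⟩
    rw [hrow, mem_transl] at hx
    obtain ⟨hx₀, hxl, -⟩ := hx
    exact ⟨by simpa using hx₀, by simpa [sub_le_iff_le_add, add_comm] using hxl⟩
  obtain ⟨hk, hs'₁⟩ := eq_add_one_and_eq_sub_one_of_midpoints_mem_Icc hl hkl hmid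
  refine ⟨by omega, ?_, ?_⟩ <;> ext <;> simp [wOne, wTwo] <;> omega

/-- if `𝒯(h) = {s + T₂}` and `𝒯(h+1) = {s' + T₁}`, then `k − ℓ = 1`
and `s' − s = (−1, 2) = w₁ + w₂`. -/
theorem consecutive_short_sections
    (k l : ℤ) (hl : 0 ≤ l) (hkl : l < k)
    (S : Set Z2) (hdir : directSum S (Tset k l))
    (hconv : latticeConvex (S + Tset k l))
    (h : ℤ) (s s' : Z2) (hs : s ∈ S) (hs' : s' ∈ S)
    (hh : TcalSet k l S h = {transl s (T2set l)})
    (hh' : TcalSet k l S (h + 1) = {transl s' (T1set k)}) :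
    k - l = 1 ∧ s' - s = ((-1 : ℤ), (2 : ℤ)) ∧ s' - s = wOne k + wTwo l :=
  consecutive_short_sections_general k l hl hkl S hconv h s s' hs hs' hh hh'
end

section
/- Let S ⊆ ℤ² be nonempty and such that the sum of S and T is direct and K := S ⊕ T is lattice-convex. Then the set {h ∈ ℤ : I_h ≠ ∅} is an interval of integers: if I_{h₁} ≠ ∅ and I_{h₂} ≠ ∅ and h₁ ≤ h ≤ h₂, then I_h ≠ ∅. -/
open scoped Pointwise ENNReal

/-!
The heights at which a convex set `C ⊆ ℝ²` contains a horizontal unit segment form the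
projection of the convex set `C ∩ (C - (1, 0))`, hence an interval, and every horizontal unit
segment contains a lattice point. A point `s + t` of `S ⊕ T` lies at height `s.2` or `s.2 + 1`,
and `s + {(0, 0), (1, 0)} ⊆ S ⊕ T` is a horizontal unit segment at height `s.2`; so every height
strictly between two nonempty sections carries such a segment.
-/

theorem Convex.ordConnected_unitSegment_heights {C : Set R2} (hC : Convex ℝ C) :
    {y : ℝ | ∃ c, (c, y) ∈ C ∧ (c + 1, y) ∈ C}.OrdConnected := by
  have hheights : {y : ℝ | ∃ c, (c, y) ∈ C ∧ (c + 1, y) ∈ C} =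
      LinearMap.snd ℝ ℝ ℝ '' (C ∩ (fun x => ((1, 0) : R2) + x) ⁻¹' C) := by
    ext y
    constructor
    · rintro ⟨c, hc, hc'⟩
      exact ⟨(c, y), ⟨hc, by simpa [add_comm] using hc'⟩, rfl⟩
    · rintro ⟨⟨c, y⟩, ⟨hc, hc'⟩, rfl⟩
      exact ⟨c, hc, by simpa [add_comm] using hc'⟩
  rw [hheights]
  exact ((hC.inter (hC.translate_preimage_right _)).linear_image _).ordConnected

theorem Convex.exists_int_mem_of_unitSegment {C : Set R2} (hC : Convex ℝ C) {c y : ℝ}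
    (hc : (c, y) ∈ C) (hc' : (c + 1, y) ∈ C) : ∃ m : ℤ, ((m : ℝ), y) ∈ C := by
  set μ : ℝ := ⌈c⌉ - c
  have hμ₀ : 0 ≤ μ := sub_nonneg.mpr (Int.le_ceil c)
  have hμ₁ : μ ≤ 1 := by linarith [Int.ceil_lt_add_one c]
  refine ⟨⌈c⌉, ?_⟩
  convert hC hc hc' (sub_nonneg.mpr hμ₁) hμ₀ (sub_add_cancel 1 μ) using 1
  ext <;> simp only [Prod.smul_mk, Prod.mk_add_mk, smul_eq_mul, μ] <;> ring

theorem latticeConvex.sect_nonempty_of_unitSegments {K : Set Z2} (hK : latticeConvex K)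
    {a b r₁ r₂ h : ℤ} (ha : (a, r₁) ∈ K) (ha' : (a + 1, r₁) ∈ K)
    (hb : (b, r₂) ∈ K) (hb' : (b + 1, r₂) ∈ K) (hr₁ : r₁ ≤ h) (hr₂ : h ≤ r₂) :
    (sect K h).Nonempty := by
  obtain ⟨C, hC, rfl⟩ := hK
  have hmid : (h : ℝ) ∈ {y : ℝ | ∃ c, (c, y) ∈ C ∧ (c + 1, y) ∈ C} :=
    hC.ordConnected_unitSegment_heights.out (x := r₁) ⟨a, ha, by simpa [toR] using ha'⟩
      (y := r₂) ⟨b, hb, by simpa [toR] using hb'⟩ ⟨by exact_mod_cast hr₁, by exact_mod_cast hr₂⟩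
  obtain ⟨c, hc, hc'⟩ := hmid
  obtain ⟨m, hm⟩ := hC.exists_int_mem_of_unitSegment hc hc'
  exact ⟨(m, h), hm, rfl⟩

theorem exists_unitSegment_of_mem_add_Tset {k l : ℤ} (hk : 1 ≤ k) {S : Set Z2} {p : Z2}
    (hp : p ∈ S + Tset k l) :
    ∃ a r : ℤ, r ≤ p.2 ∧ p.2 ≤ r + 1 ∧
      ((a, r) : Z2) ∈ S + Tset k l ∧ ((a + 1, r) : Z2) ∈ S + Tset k l := by
  obtain ⟨s, hs, t, ht, rfl⟩ := hp
  have ht₂ : t.2 = 0 ∨ t.2 = 1 := ht.imp (·.2.2) (·.2.2)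
  have h₀ : (0 : Z2) ∈ Tset k l := Or.inl ⟨le_rfl, zero_le_one.trans hk, rfl⟩
  have h₁ : ((1, 0) : Z2) ∈ Tset k l := Or.inl ⟨zero_le_one, hk, rfl⟩
  refine ⟨s.1, s.2, by simp only [Prod.snd_add]; omega, by simp only [Prod.snd_add]; omega,
    by simpa using Set.add_mem_add hs h₀, ?_⟩
  convert Set.add_mem_add hs h₁ using 1
  ext <;> simp

theorem sections_form_interval_general
    (k l : ℤ) (hl : 0 ≤ l) (hkl : l < k)
    (S : Set Z2)
    (hconv : latticeConvex (S + Tset k l)) :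
    ∀ h₁ h₂ h : ℤ, (sect (S + Tset k l) h₁).Nonempty → (sect (S + Tset k l) h₂).Nonempty →
      h₁ ≤ h → h ≤ h₂ → (sect (S + Tset k l) h).Nonempty := by
  intro h₁ h₂ h hne₁ hne₂ hle₁ hle₂
  rcases hle₁.eq_or_lt with rfl | hlt₁
  · exact hne₁
  rcases hle₂.eq_or_lt with rfl | hlt₂
  · exact hne₂
  obtain ⟨p, hp, rfl⟩ := hne₁
  obtain ⟨q, hq, rfl⟩ := hne₂
  obtain ⟨a, r₁, hr₁, -, ha, ha'⟩ := exists_unitSegment_of_mem_add_Tset (by omega) hp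
  obtain ⟨b, r₂, -, hr₂, hb, hb'⟩ := exists_unitSegment_of_mem_add_Tset (by omega) hq
  exact hconv.sect_nonempty_of_unitSegments ha ha' hb hb' (by omega) (by omega)

/-- the set of heights of nonempty horizontal sections of `S ⊕ T`
is an interval of integers. -/
theorem sections_form_interval
    (k l : ℤ) (hl : 0 ≤ l) (hkl : l < k)
    (S : Set Z2) (hSne : S.Nonempty) (hdir : directSum S (Tset k l))
    (hconv : latticeConvex (S + Tset k l)) :
    ∀ h₁ h₂ h : ℤ, (sect (S + Tset k l) h₁).Nonempty → (sect (S + Tset k l) h₂).Nonempty →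
      h₁ ≤ h → h ≤ h₂ → (sect (S + Tset k l) h).Nonempty :=
  sections_form_interval_general k l hl hkl S hconv
end

section
/- Let S ⊆ ℤ² be nonempty and such that the sum of S and T is direct and S ⊕ T is lattice-convex. Then the graph G_S is connected. -/
open scoped Pointwise ENNReal

/-!
Every point of `S ⊕ T` lies in exactly one tile `s + T`, whose bottom row `{s₁, …, s₁ + k} × {s₂}`
and top row `{s₁, …, s₁ + ℓ} × {s₂ + 1}` are segments, and by convexity every row of `S ⊕ T` is a
segment. The tile right after that of `s` in a row belongs to `s - w₁` if the row is the bottom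
row of `s` (two bottom rows cannot abut: the top row between them would have a gap shorter than a
tile) and to `s + w₂` if it is its top row. So the elements of `S` whose tiles meet a given row
form a path in `G_S`.

Going up from `s`: if `S` meets the row above `s`, that row is shared by two tiles. Otherwise the
row above `s` is just the top row of `s`, with `ℓ + 1 ≤ k` points, yet by convexity it contains
the at least `k` midpoints of the bottom rows of `s` and of a tile `τ` two rows higher; this
forces `k = ℓ + 1` and `τ = s + w₁ + w₂`.
-/

theorem Convex.mk_mem_of_mem_Icc {C : Set R2} (hC : Convex ℝ C) {a b x r : ℝ}
    (ha : (a, r) ∈ C) (hb : (b, r) ∈ C) (hx : x ∈ Set.Icc a b) : (x, r) ∈ C := by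
  refine hC.segment_subset ha hb ?_
  rw [← Prod.image_mk_segment_left, segment_eq_Icc (hx.1.trans hx.2)]
  exact ⟨x, hx, rfl⟩

namespace latticeConvex

variable {K : Set Z2}

theorem mk_mem_of_le_of_le (hK : latticeConvex K) {a b x m : ℤ} (ha : (a, m) ∈ K)
    (hb : (b, m) ∈ K) (hax : a ≤ x) (hxb : x ≤ b) : (x, m) ∈ K := by
  obtain ⟨C, hC, rfl⟩ := hK
  exact hC.mk_mem_of_mem_Icc ha hb ⟨by exact_mod_cast hax, by exact_mod_cast hxb⟩

theorem mem_of_add_eq_add_self (hK : latticeConvex K) {p q z : Z2} (hp : p ∈ K) (hq : q ∈ K)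
    (h : p + q = z + z) : z ∈ K := by
  obtain ⟨C, hC, rfl⟩ := hK
  have h1 : (p.1 + q.1 : ℝ) = z.1 + z.1 := by exact_mod_cast congrArg Prod.fst h
  have h2 : (p.2 + q.2 : ℝ) = z.2 + z.2 := by exact_mod_cast congrArg Prod.snd h
  have hmid : toR z = midpoint ℝ (toR p) (toR q) := by
    rw [midpoint_eq_smul_add]
    ext <;> simp only [toR, Prod.fst_add, Prod.snd_add, Prod.smul_fst, Prod.smul_snd,
      smul_eq_mul, invOf_eq_inv] <;> linarith
  exact hC.segment_subset hp hq (hmid ▸ midpoint_mem_segment _ _)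

theorem mk_mem_of_two_mul_mem_Icc (hK : latticeConvex K) {a b n h z : ℤ} (ha : (a, h) ∈ K)
    (ha' : (a + n, h) ∈ K) (hb : (b, h + 2) ∈ K) (hb' : (b + n, h + 2) ∈ K)
    (hz : 2 * z ∈ Set.Icc (a + b) (a + b + 2 * n)) : (z, h + 1) ∈ K := by
  obtain ⟨hz1, hz2⟩ := hz
  set p := max a (2 * z - b - n)
  have hp1 : 2 * z - b - n ≤ p := le_max_right _ _
  have hp2 : p ≤ a + n := max_le (by omega) (by omega)
  have hq1 : p ≤ 2 * z - b := max_le (by omega) (by omega)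
  have hp : (p, h) ∈ K := hK.mk_mem_of_le_of_le ha ha' (le_max_left _ _) hp2
  have hq : (2 * z - p, h + 2) ∈ K := hK.mk_mem_of_le_of_le hb hb' (by omega) (by omega)
  exact hK.mem_of_add_eq_add_self hp hq (by ext <;> simp only [Prod.fst_add, Prod.snd_add] <;> ring)

/-- The segments from `(a, h)` to `(b, h')` and from `(a + 1, h)` to `(b + 1, h')` cut the row `j`
in a real interval of length one. -/
theorem exists_mk_mem_of_le_of_le (hK : latticeConvex K) {a b h h' j : ℤ} (ha : (a, h) ∈ K)
    (ha' : (a + 1, h) ∈ K) (hb : (b, h') ∈ K) (hb' : (b + 1, h') ∈ K) (hh : h < h')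
    (hhj : h ≤ j) (hjh : j ≤ h') : ∃ x : ℤ, (x, j) ∈ K := by
  obtain ⟨C, hC, rfl⟩ := hK
  have hd : (0 : ℝ) < h' - h := sub_pos.2 (by exact_mod_cast hh)
  set t : ℝ := (j - h) / (h' - h)
  have ht : t ∈ Set.Icc (0 : ℝ) 1 :=
    ⟨div_nonneg (sub_nonneg.2 (by exact_mod_cast hhj)) hd.le,
      (div_le_one hd).2 (by linarith [(Int.cast_le (R := ℝ)).2 hjh])⟩
  have htj : (h : ℝ) + t * (h' - h) = j := by simp only [t]; field_simp; ring
  set c : ℝ := a + t * (b - a)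
  have hc : (c, (j : ℝ)) ∈ C := by
    have := hC.add_smul_sub_mem ha hb ht
    rwa [show toR (a, h) + t • (toR (b, h') - toR (a, h)) = (c, (j : ℝ)) by
      ext <;> simp [toR, c, ← htj]] at this
  have hc' : (c + 1, (j : ℝ)) ∈ C := by
    have := hC.add_smul_sub_mem ha' hb' ht
    rwa [show toR (a + 1, h) + t • (toR (b + 1, h') - toR (a + 1, h)) = (c + 1, (j : ℝ)) by
      ext <;> simp [toR, c, ← htj]; ring] at this
  exact ⟨⌈c⌉, hC.mk_mem_of_mem_Icc hc hc' ⟨Int.le_ceil c, (Int.ceil_lt_add_one c).le⟩⟩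

end latticeConvex

theorem directSum.eq_of_sub_mem {S T : Set Z2} (h : directSum S T) {s s' p : Z2} (hs : s ∈ S)
    (hs' : s' ∈ S) (ht : p - s ∈ T) (ht' : p - s' ∈ T) : s = s' :=
  (h s hs s' hs' _ ht _ ht' (by rw [add_sub_cancel, add_sub_cancel])).1

/-- `(x, m) ∈ s + T`, written out in coordinates. -/
def tileCovers (k l : ℤ) (s : Z2) (x m : ℤ) : Prop :=
  (m = s.2 ∧ s.1 ≤ x ∧ x ≤ s.1 + k) ∨ (m = s.2 + 1 ∧ s.1 ≤ x ∧ x ≤ s.1 + l)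

section Tiles

variable {k l : ℤ} {S : Set Z2}

theorem tileCovers_iff_sub_mem_Tset {s : Z2} {x m : ℤ} :
    tileCovers k l s x m ↔ ((x, m) : Z2) - s ∈ Tset k l := by
  simp only [tileCovers, Tset, T1set, T2set, Set.mem_union, Set.mem_ofPred_eq, Prod.fst_sub,
    Prod.snd_sub]
  omega

theorem mem_add_Tset_iff {x m : ℤ} :
    ((x, m) : Z2) ∈ S + Tset k l ↔ ∃ s ∈ S, tileCovers k l s x m := by
  simp only [tileCovers_iff_sub_mem_Tset, Set.mem_add]
  constructor
  · rintro ⟨s, hs, t, ht, hst⟩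
    exact ⟨s, hs, by rwa [← hst, add_sub_cancel_left]⟩
  · rintro ⟨s, hs, h⟩
    exact ⟨s, hs, _, h, add_sub_cancel _ _⟩

theorem directSum.tileCovers_unique (hdir : directSum S (Tset k l)) {s s' : Z2} {x m : ℤ}
    (hs : s ∈ S) (hs' : s' ∈ S) (h : tileCovers k l s x m) (h' : tileCovers k l s' x m) :
    s = s' :=
  hdir.eq_of_sub_mem hs hs' (tileCovers_iff_sub_mem_Tset.1 h) (tileCovers_iff_sub_mem_Tset.1 h')

theorem add_lt_fst_of_snd_eq (hdir : directSum S (Tset k l)) (hk : 0 ≤ k) {s s' : Z2}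
    (hs : s ∈ S) (hs' : s' ∈ S) (h2 : s.2 = s'.2) (h1 : s.1 < s'.1) : s.1 + k < s'.1 := by
  by_contra! hle
  have := hdir.tileCovers_unique hs hs' (x := s'.1) (m := s.2)
    (Or.inl ⟨rfl, h1.le, hle⟩) (Or.inl ⟨h2, le_rfl, by omega⟩)
  exact h1.ne (congrArg Prod.fst this)

theorem exists_tileCovers_start (hdir : directSum S (Tset k l))
    (hK : latticeConvex (S + Tset k l)) {s : Z2} {e x m : ℤ} (hs : s ∈ S)
    (he : tileCovers k l s e m) (hne : ¬ tileCovers k l s (e + 1) m)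
    (hx : (x, m) ∈ S + Tset k l) (hex : e < x) :
    ∃ τ ∈ S, τ.1 = e + 1 ∧ tileCovers k l τ (e + 1) m := by
  obtain ⟨τ, hτ, hcov⟩ := mem_add_Tset_iff.1
    (hK.mk_mem_of_le_of_le (mem_add_Tset_iff.2 ⟨s, hs, he⟩) hx (by omega) hex)
  refine ⟨τ, hτ, ?_, hcov⟩
  by_contra hτe
  have hτe : tileCovers k l τ e m := by unfold tileCovers at hcov ⊢; omega
  exact hne (hdir.tileCovers_unique hs hτ he hτe ▸ hcov)

theorem fst_ne_add_add_one_of_snd_eq (hl : 0 ≤ l) (hkl : l < k) (hdir : directSum S (Tset k l))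
    (hK : latticeConvex (S + Tset k l)) {s s' : Z2} (hs : s ∈ S) (hs' : s' ∈ S)
    (h2 : s.2 = s'.2) : s'.1 ≠ s.1 + k + 1 := by
  intro h1
  obtain ⟨τ, hτ, hτ1, hcov⟩ := exists_tileCovers_start hdir hK hs (e := s.1 + l) (m := s.2 + 1)
    (Or.inr ⟨rfl, by omega, le_rfl⟩) (by unfold tileCovers; omega)
    (mem_add_Tset_iff.2 ⟨s', hs', Or.inr ⟨by omega, le_rfl, by omega⟩⟩) (by omega)
  rcases hcov with ⟨hτ2, -⟩ | ⟨hτ2, -⟩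
  · have := hdir.tileCovers_unique hτ hs' (x := s'.1) (m := s.2 + 1)
      (Or.inl ⟨hτ2, by omega, by omega⟩) (Or.inr ⟨by omega, le_rfl, by omega⟩)
    have := congrArg Prod.snd this
    omega
  · have := add_lt_fst_of_snd_eq hdir (by omega) hs hτ (by omega) (by omega)
    omega

theorem exists_next_tile (hl : 0 ≤ l) (hkl : l < k) (hdir : directSum S (Tset k l))
    (hK : latticeConvex (S + Tset k l)) {s : Z2} {x x' m : ℤ} (hs : s ∈ S)
    (hx : tileCovers k l s x m) (hx' : (x', m) ∈ S + Tset k l) (hxx : x ≤ x')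
    (hne : ¬ tileCovers k l s x' m) :
    ∃ τ ∈ S, (τ = s - wOne k ∨ τ = s + wTwo l) ∧ tileCovers k l τ τ.1 m ∧ x < τ.1 ∧ τ.1 ≤ x' := by
  unfold tileCovers at hne
  rcases hx with ⟨hm, h1, h2⟩ | ⟨hm, h1, h2⟩
  · obtain ⟨τ, hτ, hτ1, hcov⟩ := exists_tileCovers_start hdir hK hs (e := s.1 + k)
      (Or.inl ⟨hm, by omega, le_rfl⟩) (by unfold tileCovers; omega) hx' (by omega)
    rcases hcov with ⟨hτ2, -⟩ | ⟨hτ2, -⟩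
    · exact absurd hτ1 (fst_ne_add_add_one_of_snd_eq hl hkl hdir hK hs hτ (by omega))
    · refine ⟨τ, hτ, Or.inl ?_, Or.inr ⟨hτ2, le_rfl, by omega⟩, by omega, by omega⟩
      ext <;> simp only [Prod.fst_sub, Prod.snd_sub, wOne] <;> omega
  · obtain ⟨τ, hτ, hτ1, hcov⟩ := exists_tileCovers_start hdir hK hs (e := s.1 + l)
      (Or.inr ⟨hm, by omega, le_rfl⟩) (by unfold tileCovers; omega) hx' (by omega)
    rcases hcov with ⟨hτ2, -⟩ | ⟨hτ2, -⟩
    · refine ⟨τ, hτ, Or.inr ?_, Or.inl ⟨hτ2, le_rfl, by omega⟩, by omega, by omega⟩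
      ext <;> simp only [Prod.fst_add, Prod.snd_add, wTwo] <;> omega
    · have := add_lt_fst_of_snd_eq hdir (by omega) hs hτ (by omega) (by omega)
      omega

theorem eq_of_tileCovers_of_forall_snd_ne (hl : 0 ≤ l) (hkl : l < k)
    (hdir : directSum S (Tset k l)) (hK : latticeConvex (S + Tset k l)) {s σ : Z2} {x x' m : ℤ}
    (hs : s ∈ S) (hσ : σ ∈ S) (hx : tileCovers k l s x m) (hx' : tileCovers k l σ x' m)
    (hrow : ∀ ρ ∈ S, ρ.2 ≠ m) : s = σ := by
  wlog hxx : x ≤ x' generalizing s σ x x'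
  · exact (this hσ hs hx' hx (by omega)).symm
  by_contra hsσ
  obtain ⟨τ, hτ, hsτ, hτm, -⟩ := exists_next_tile hl hkl hdir hK hs hx
    (mem_add_Tset_iff.2 ⟨σ, hσ, hx'⟩) hxx fun h => hsσ (hdir.tileCovers_unique hs hσ h hx')
  have hs2 := hrow s hs
  have hτ2 := hrow τ hτ
  unfold tileCovers at hx hτm
  rcases hsτ with rfl | rfl <;> simp only [Prod.snd_sub, Prod.snd_add, wOne, wTwo] at hτ2 hτm <;>
    omega

instance adjStep.instSymm : Std.Symm (adjStep k l S) where
  symm a b := by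
    rintro ⟨ha, hb, h⟩
    refine ⟨hb, ha, ?_⟩
    rw [← neg_sub b a]
    rcases h with h | h | h | h | ⟨hk, h | h⟩ <;> simp_all

theorem adjStep_of_eq {a b : Z2} (ha : a ∈ S) (hb : b ∈ S)
    (h : b = a - wOne k ∨ b = a + wTwo l) : adjStep k l S a b :=
  ⟨ha, hb, by rcases h with rfl | rfl <;> simp⟩

theorem reflTransGen_of_tileCovers_of_le (hl : 0 ≤ l) (hkl : l < k)
    (hdir : directSum S (Tset k l)) (hK : latticeConvex (S + Tset k l)) {s s' : Z2} {x x' m : ℤ}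
    (hs : s ∈ S) (hs' : s' ∈ S) (hx : tileCovers k l s x m) (hx' : tileCovers k l s' x' m)
    (hxx : x ≤ x') : Relation.ReflTransGen (adjStep k l S) s s' := by
  by_cases hsx' : tileCovers k l s x' m
  · rw [hdir.tileCovers_unique hs hs' hsx' hx']
  obtain ⟨τ, hτ, hsτ, hτm, hxτ, hτx'⟩ := exists_next_tile hl hkl hdir hK hs hx
    (mem_add_Tset_iff.2 ⟨s', hs', hx'⟩) hxx hsx'
  exact .head (adjStep_of_eq hs hτ hsτ)
    (reflTransGen_of_tileCovers_of_le hl hkl hdir hK hτ hs' hτm hx' hτx')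
termination_by (x' - x).toNat
decreasing_by omega

theorem reflTransGen_of_tileCovers (hl : 0 ≤ l) (hkl : l < k) (hdir : directSum S (Tset k l))
    (hK : latticeConvex (S + Tset k l)) {s s' : Z2} {x x' m : ℤ} (hs : s ∈ S) (hs' : s' ∈ S)
    (hx : tileCovers k l s x m) (hx' : tileCovers k l s' x' m) :
    Relation.ReflTransGen (adjStep k l S) s s' := by
  rcases le_total x x' with hxx | hxx
  · exact reflTransGen_of_tileCovers_of_le hl hkl hdir hK hs hs' hx hx' hxx
  · exact Std.Symm.symm _ _ (reflTransGen_of_tileCovers_of_le hl hkl hdir hK hs' hs hx' hx hxx)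

theorem sub_eq_wOne_add_wTwo (hl : 0 ≤ l) (hkl : l < k) (hK : latticeConvex (S + Tset k l))
    {s τ : Z2} (hs : s ∈ S) (hτ : τ ∈ S) (hτ2 : τ.2 = s.2 + 2)
    (hrow : ∀ z, (z, s.2 + 1) ∈ S + Tset k l → s.1 ≤ z ∧ z ≤ s.1 + l) :
    k = l + 1 ∧ τ - s = wOne k + wTwo l := by
  have hmid : ∀ z, 2 * z ∈ Set.Icc (s.1 + τ.1) (s.1 + τ.1 + 2 * k) → s.1 ≤ z ∧ z ≤ s.1 + l :=
    fun z hz => hrow z <| hK.mk_mem_of_two_mul_mem_Icc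
      (mem_add_Tset_iff.2 ⟨s, hs, Or.inl ⟨rfl, le_rfl, by omega⟩⟩)
      (mem_add_Tset_iff.2 ⟨s, hs, Or.inl ⟨rfl, by omega, le_rfl⟩⟩)
      (mem_add_Tset_iff.2 ⟨τ, hτ, Or.inl ⟨hτ2.symm, le_rfl, by omega⟩⟩)
      (mem_add_Tset_iff.2 ⟨τ, hτ, Or.inl ⟨hτ2.symm, by omega, le_rfl⟩⟩) hz
  have h1 := hmid ((s.1 + τ.1 + 1) / 2) ⟨by omega, by omega⟩
  have h2 := hmid ((s.1 + τ.1) / 2 + k) ⟨by omega, by omega⟩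
  refine ⟨by omega, ?_⟩
  ext <;> simp only [Prod.fst_sub, Prod.snd_sub, Prod.fst_add, Prod.snd_add, wOne, wTwo] <;> omega

theorem exists_mem_snd_eq_add_two (hk : 1 ≤ k) (hK : latticeConvex (S + Tset k l)) {s s' : Z2}
    (hs : s ∈ S) (hs' : s' ∈ S) (hlt : s.2 < s'.2) (hrow : ∀ σ ∈ S, σ.2 ≠ s.2 + 1) :
    ∃ τ ∈ S, τ.2 = s.2 + 2 := by
  have := hrow s' hs'
  obtain ⟨x, hx⟩ := hK.exists_mk_mem_of_le_of_le (j := s.2 + 2)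
    (mem_add_Tset_iff.2 ⟨s, hs, Or.inl ⟨rfl, le_rfl, by omega⟩⟩)
    (mem_add_Tset_iff.2 ⟨s, hs, Or.inl ⟨rfl, by omega, by omega⟩⟩)
    (mem_add_Tset_iff.2 ⟨s', hs', Or.inl ⟨rfl, le_rfl, by omega⟩⟩)
    (mem_add_Tset_iff.2 ⟨s', hs', Or.inl ⟨rfl, by omega, by omega⟩⟩) hlt (by omega) (by omega)
  obtain ⟨τ, hτ, hcov⟩ := mem_add_Tset_iff.1 hx
  have := hrow τ hτ
  exact ⟨τ, hτ, by unfold tileCovers at hcov; omega⟩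

theorem exists_reflTransGen_of_snd_lt (hl : 0 ≤ l) (hkl : l < k)
    (hdir : directSum S (Tset k l)) (hK : latticeConvex (S + Tset k l)) {s s' : Z2}
    (hs : s ∈ S) (hs' : s' ∈ S) (hlt : s.2 < s'.2) :
    ∃ σ ∈ S, s.2 < σ.2 ∧ σ.2 ≤ s'.2 ∧ Relation.ReflTransGen (adjStep k l S) s σ := by
  by_cases hnext : ∃ σ ∈ S, σ.2 = s.2 + 1
  · obtain ⟨σ, hσ, hσ2⟩ := hnext
    exact ⟨σ, hσ, by omega, by omega, reflTransGen_of_tileCovers hl hkl hdir hK hs hσ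
      (Or.inr ⟨rfl, le_rfl, by omega⟩) (Or.inl ⟨hσ2.symm, le_rfl, by omega⟩)⟩
  push Not at hnext
  obtain ⟨τ, hτ, hτ2⟩ := exists_mem_snd_eq_add_two (by omega) hK hs hs' hlt hnext
  have hrow : ∀ z, (z, s.2 + 1) ∈ S + Tset k l → s.1 ≤ z ∧ z ≤ s.1 + l := by
    intro z hz
    obtain ⟨σ, hσ, hcov⟩ := mem_add_Tset_iff.1 hz
    obtain rfl := eq_of_tileCovers_of_forall_snd_ne hl hkl hdir hK hs hσ
      (Or.inr ⟨rfl, le_rfl, by omega⟩) hcov hnext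
    unfold tileCovers at hcov
    omega
  obtain ⟨hk, hτs⟩ := sub_eq_wOne_add_wTwo hl hkl hK hs hτ hτ2 hrow
  have := hnext s' hs'
  exact ⟨τ, hτ, by omega, by omega, .single ⟨hs, hτ, .inr <| .inr <| .inr <| .inr ⟨hk, .inl hτs⟩⟩⟩

theorem reflTransGen_of_snd_le (hl : 0 ≤ l) (hkl : l < k) (hdir : directSum S (Tset k l))
    (hK : latticeConvex (S + Tset k l)) {s s' : Z2} (hs : s ∈ S) (hs' : s' ∈ S)
    (hle : s.2 ≤ s'.2) : Relation.ReflTransGen (adjStep k l S) s s' := by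
  rcases hle.eq_or_lt with heq | hlt
  · exact reflTransGen_of_tileCovers hl hkl hdir hK hs hs' (Or.inl ⟨rfl, le_rfl, by omega⟩)
      (Or.inl ⟨heq, le_rfl, by omega⟩)
  obtain ⟨σ, hσ, hsσ, hσs', hrel⟩ := exists_reflTransGen_of_snd_lt hl hkl hdir hK hs hs' hlt
  exact hrel.trans (reflTransGen_of_snd_le hl hkl hdir hK hσ hs' hσs')
termination_by (s'.2 - s.2).toNat
decreasing_by omega

end Tiles

theorem graph_connected_general
    (k l : ℤ) (hl : 0 ≤ l) (hkl : l < k)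
    (S : Set Z2) (hdir : directSum S (Tset k l))
    (hconv : latticeConvex (S + Tset k l)) :
    GConnected k l S := by
  intro s hs s' hs'
  rcases le_total s.2 s'.2 with hle | hle
  · exact reflTransGen_of_snd_le hl hkl hdir hconv hs hs' hle
  · exact Std.Symm.symm _ _ (reflTransGen_of_snd_le hl hkl hdir hconv hs' hs hle)

/-- if the sum of `S` and `T` is direct and `S ⊕ T` is lattice-convex,
then the graph `G_S` is connected. -/
theorem graph_connected
    (k l : ℤ) (hl : 0 ≤ l) (hkl : l < k)
    (S : Set Z2) (hSne : S.Nonempty) (hdir : directSum S (Tset k l))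
    (hconv : latticeConvex (S + Tset k l)) :
    GConnected k l S :=
  graph_connected_general k l hl hkl S hdir hconv
end
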